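/- arXiv:1907.03913 — 7 statements merged into one kernel-verified Lean document; each statement's English description precedes it below -/
import Mathlib

section
/- Let n ≥ 4 be an odd integer. If G is an n-vertex 3-chromatic 2-connected simple graph, then i_2(G) ≤ C(n,2) − n = i_2(C_n), with equality if and only if G is isomorphic to the cycle C_n. -/
open SimpleGraph

/-- The number of independent sets of size `t` in `G`. -/
noncomputable def numIndepSize {V : Type*} [Fintype V] (G : SimpleGraph V) (t : ℕ) : ℕ :=
  Nat.card {s : Finset V // s.card = t ∧ ∀ a ∈ s, ∀ b ∈ s, ¬ G.Adj a b}

/-- `G` is `ℓ`-connected: it has more than `ℓ` vertices and deleting any set of fewer than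
`ℓ` vertices leaves a connected graph. -/
def LConnected {V : Type*} [Fintype V] (G : SimpleGraph V) (ℓ : ℕ) : Prop :=
  ℓ < Fintype.card V ∧
    ∀ s : Finset V, s.card < ℓ → (G.induce ((↑s : Set V)ᶜ)).Connected

lemma count_lemma {V : Type*} [Fintype V] [DecidableEq V] (G : SimpleGraph V)
    [DecidableRel G.Adj] :
    numIndepSize G 2 + G.edgeFinset.card = (Fintype.card V).choose 2 := by
  classical
  have h1 : numIndepSize G 2
      = ((Finset.univ.powersetCard 2).filter
          (fun s => ∀ a ∈ s, ∀ b ∈ s, ¬ G.Adj a b)).card := by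
    rw [numIndepSize, Nat.card_eq_fintype_card, Fintype.card_subtype]
    congr 1
    ext s
    simp [Finset.mem_powersetCard_univ, and_comm]
  have h2 : G.edgeFinset.card
      = ((Finset.univ.powersetCard 2).filter
          (fun s => ¬ ∀ a ∈ s, ∀ b ∈ s, ¬ G.Adj a b)).card := by
    apply Finset.card_bij (fun e _ => Sym2.lift ⟨fun a b => ({a, b} : Finset V),
      fun a b => Finset.pair_comm a b⟩ e)
    · intro e he
      induction e with
      | _ a b =>
        rw [SimpleGraph.mem_edgeFinset, SimpleGraph.mem_edgeSet] at he
        simp only [Sym2.lift_mk, Finset.mem_filter, Finset.mem_powersetCard_univ]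
        refine ⟨Finset.card_pair he.ne, ?_⟩
        push_neg
        exact ⟨a, by simp, b, by simp, he⟩
    · intro e he e' he' h
      induction e with
      | _ a b =>
        induction e' with
        | _ c d =>
          simp only [Sym2.lift_mk] at h
          rw [SimpleGraph.mem_edgeFinset, SimpleGraph.mem_edgeSet] at he he'
          have hab : a ≠ b := he.ne
          have hcd : c ≠ d := he'.ne
          have ha : a ∈ ({c, d} : Finset V) := by rw [← h]; simp
          have hb : b ∈ ({c, d} : Finset V) := by rw [← h]; simp
          simp only [Finset.mem_insert, Finset.mem_singleton] at ha hb
          rw [Sym2.eq_iff]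
          rcases ha with rfl | rfl
          · rcases hb with rfl | rfl
            · exact absurd rfl hab
            · exact Or.inl ⟨rfl, rfl⟩
          · rcases hb with rfl | rfl
            · exact Or.inr ⟨rfl, rfl⟩
            · exact absurd rfl hab
    · intro s hs
      simp only [Finset.mem_filter, Finset.mem_powersetCard_univ] at hs
      obtain ⟨hs2, hni⟩ := hs
      push_neg at hni
      obtain ⟨a, ha, b, hb, hadj⟩ := hni
      refine ⟨s(a, b), by simp [SimpleGraph.mem_edgeFinset, hadj], ?_⟩
      simp only [Sym2.lift_mk]
      obtain ⟨x, y, hxy, rfl⟩ := Finset.card_eq_two.mp hs2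
      simp only [Finset.mem_insert, Finset.mem_singleton] at ha hb
      have hne : a ≠ b := hadj.ne
      rcases ha with rfl | rfl <;> rcases hb with rfl | rfl <;>
        first | exact absurd rfl hne | simp [Finset.pair_comm]
  rw [h1, h2, Finset.card_filter_add_card_filter_not,
    Finset.card_powersetCard, Finset.card_univ]

lemma min_degree_two {V : Type*} [Fintype V] [DecidableEq V] (G : SimpleGraph V)
    [DecidableRel G.Adj] (h4 : 4 ≤ Fintype.card V) (hconn : LConnected G 2) (v : V) :
    2 ≤ G.degree v := by
  by_contra h
  push_neg at h
  set s := G.neighborFinset v with hs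
  have hscard : s.card < 2 := by
    rw [hs, ← SimpleGraph.degree]; omega
  have hcc := hconn.2 s hscard
  have hv : v ∈ (↑s : Set V)ᶜ := by
    simp [hs]
  obtain ⟨w, hw⟩ : ∃ w, w ∉ insert v s := by
    by_contra hh
    push_neg at hh
    have : (Finset.univ : Finset V) ⊆ insert v s := fun x _ => hh x
    have := Finset.card_le_card this
    rw [Finset.card_univ] at this
    have := Finset.card_insert_le v s
    omega
  simp only [Finset.mem_insert, not_or] at hw
  have hwc : w ∈ (↑s : Set V)ᶜ := by simp [hw.2]
  have hreach := hcc.preconnected ⟨v, hv⟩ ⟨w, hwc⟩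
  obtain ⟨p⟩ := hreach
  have hvw : (⟨v, hv⟩ : ((↑s : Set V)ᶜ : Set V)) ≠ ⟨w, hwc⟩ := by
    simp [Ne.symm (Ne.intro hw.1)]
  have hnn : ¬ p.Nil := by
    intro hn
    exact hvw (hn.eq)
  obtain ⟨u, hadj, q, rfl⟩ := SimpleGraph.Walk.not_nil_iff.mp hnn
  have hGadj : G.Adj v ↑u := hadj
  have hus : (↑u : V) ∈ s := (SimpleGraph.mem_neighborFinset G v ↑u).mpr hGadj
  exact u.2 hus

lemma cycle_edge_count (m : ℕ) :
    (cycleGraph (m + 3)).edgeFinset.card = m + 3 := by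
  have h := SimpleGraph.sum_degrees_eq_twice_card_edges (cycleGraph (m + 3))
  have h2 : ∑ v : Fin (m + 3), (cycleGraph (m + 3)).degree v = 2 * (m + 3) := by
    rw [Finset.sum_congr rfl (fun v _ => cycleGraph_degree_three_le)]
    simp [Finset.card_univ, mul_comm]
  omega

lemma G_edge_count_ge {V : Type*} [Fintype V] [DecidableEq V] (G : SimpleGraph V)
    [DecidableRel G.Adj] (hd : ∀ v, 2 ≤ G.degree v) :
    Fintype.card V ≤ G.edgeFinset.card := by
  have h := SimpleGraph.sum_degrees_eq_twice_card_edges G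
  have h2 : 2 * Fintype.card V ≤ ∑ v : V, G.degree v := by
    calc 2 * Fintype.card V = ∑ _v : V, 2 := by simp [Finset.card_univ, mul_comm]
    _ ≤ _ := Finset.sum_le_sum (fun i _ => hd i)
  omega

lemma G_deg_eq_two {V : Type*} [Fintype V] [DecidableEq V] (G : SimpleGraph V)
    [DecidableRel G.Adj] (hd : ∀ v, 2 ≤ G.degree v)
    (he : G.edgeFinset.card = Fintype.card V) (v : V) : G.degree v = 2 := by
  by_contra h
  have h3 : 2 < G.degree v := lt_of_le_of_ne (hd v) (Ne.symm h)
  have hlt : ∑ _v : V, 2 < ∑ v : V, G.degree v :=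
    Finset.sum_lt_sum (fun i _ => hd i) ⟨v, Finset.mem_univ v, h3⟩
  have hsum : (∑ _v : V, 2) = 2 * Fintype.card V := by
    simp [Finset.card_univ, mul_comm]
  rw [SimpleGraph.sum_degrees_eq_twice_card_edges, he, hsum] at hlt
  omega

section CycleIso
variable {V : Type*} [Fintype V] [DecidableEq V] (G : SimpleGraph V) [DecidableRel G.Adj]

/-- the neighbor of `v` other than `u` -/
noncomputable def nxt (u v : V) : V :=
  if h : ((G.neighborFinset v).erase u).Nonempty then h.choose else v

lemma nxt_def (u v : V) : nxt G u v =
  if h : ((G.neighborFinset v).erase u).Nonempty then h.choose else v := rfl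

lemma nxt_spec {u v : V} (hd : G.degree v = 2) (h : G.Adj u v) :
    G.Adj v (nxt G u v) ∧ nxt G u v ≠ u := by
  have hu : u ∈ G.neighborFinset v := by
    rw [SimpleGraph.mem_neighborFinset]; exact h.symm
  have hc : ((G.neighborFinset v).erase u).card = 1 := by
    rw [Finset.card_erase_of_mem hu, ← SimpleGraph.degree, hd]
  have hne : ((G.neighborFinset v).erase u).Nonempty :=
    Finset.card_pos.mp (by omega)
  rw [nxt_def, dif_pos hne]
  have hmem := hne.choose_spec
  rw [Finset.mem_erase, SimpleGraph.mem_neighborFinset] at hmem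
  exact ⟨hmem.2, hmem.1⟩

lemma nxt_unique {u v w : V} (hd : G.degree v = 2) (h : G.Adj u v)
    (hw : G.Adj v w) (hwu : w ≠ u) : w = nxt G u v := by
  have hu : u ∈ G.neighborFinset v := by
    rw [SimpleGraph.mem_neighborFinset]; exact h.symm
  have hc : ((G.neighborFinset v).erase u).card = 1 := by
    rw [Finset.card_erase_of_mem hu, ← SimpleGraph.degree, hd]
  have hne : ((G.neighborFinset v).erase u).Nonempty :=
    Finset.card_pos.mp (by omega)
  have hmem : w ∈ (G.neighborFinset v).erase u := by
    rw [Finset.mem_erase, SimpleGraph.mem_neighborFinset]; exact ⟨hwu, hw⟩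
  have hmem2 : nxt G u v ∈ (G.neighborFinset v).erase u := by
    rw [nxt_def, dif_pos hne]; exact hne.choose_spec
  exact Finset.card_le_one.mp (le_of_eq hc) _ hmem _ hmem2

end CycleIso

lemma cycle_iso {V : Type*} [Fintype V] [DecidableEq V] (G : SimpleGraph V) [DecidableRel G.Adj]
    (hconn : G.Connected) (hdeg : ∀ v, G.degree v = 2) (m : ℕ)
    (hcard : Fintype.card V = m + 2) :
    Nonempty (G ≃g cycleGraph (m + 2)) := by
  classical
  obtain ⟨v0⟩ : Nonempty V := hconn.nonempty
  have hdeg0 := hdeg v0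
  obtain ⟨v1, hv1⟩ : ∃ v1, G.Adj v0 v1 := by
    have : (G.neighborFinset v0).Nonempty := Finset.card_pos.mp (by
      rw [← SimpleGraph.degree, hdeg0]; omega)
    obtain ⟨w, hw⟩ := this
    exact ⟨w, (SimpleGraph.mem_neighborFinset G v0 w).mp hw⟩
  set step : V × V → V × V := fun p => (p.2, nxt G p.1 p.2) with hstep
  set g : ℕ → V × V := fun k => step^[k] (v0, v1) with hg
  set f : ℕ → V := fun k => (g k).1 with hf
  have hg_succ : ∀ k, g (k + 1) = ((g k).2, nxt G (g k).1 (g k).2) := by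
    intro k
    show step^[k+1] (v0, v1) = _
    rw [Function.iterate_succ_apply']
  have f_succ : ∀ k, f (k + 1) = (g k).2 := by
    intro k; show (g (k+1)).1 = (g k).2; rw [hg_succ k]
  have hadjg : ∀ k, G.Adj (g k).1 (g k).2 := by
    intro k
    induction k with
    | zero => exact hv1
    | succ k ih =>
      rw [hg_succ]
      exact (nxt_spec G (hdeg _) ih).1
  have hadjf : ∀ k, G.Adj (f k) (f (k + 1)) := by
    intro k; rw [f_succ]; exact hadjg k
  have hrec : ∀ k, f (k + 2) = nxt G (f k) (f (k + 1)) := by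
    intro k
    have h1 : f (k + 2) = (g (k + 1)).2 := f_succ (k + 1)
    rw [h1, hg_succ, f_succ]
  have hne2 : ∀ k, f (k + 2) ≠ f k := by
    intro k
    rw [hrec]
    exact (nxt_spec G (hdeg _) (hadjf k)).2
  have hnbrf : ∀ k, G.neighborFinset (f (k + 1)) = {f k, f (k + 2)} := by
    intro k
    have hsub : ({f k, f (k + 2)} : Finset V) ⊆ G.neighborFinset (f (k + 1)) := by
      intro x hx
      rw [Finset.mem_insert, Finset.mem_singleton] at hx
      rw [SimpleGraph.mem_neighborFinset]
      rcases hx with rfl | rfl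
      · exact (hadjf k).symm
      · exact hadjf (k + 1)
    refine (Finset.eq_of_subset_of_card_le hsub ?_).symm
    rw [← SimpleGraph.degree, hdeg, Finset.card_pair (hne2 k).symm]
  -- reversibility
  have hback : ∀ a b, g (a + 1) = g (b + 1) → g a = g b := by
    intro a b h
    have h1 : f (a + 1) = f (b + 1) := congrArg Prod.fst h
    have h2 : f (a + 2) = f (b + 2) := by
      rw [f_succ, f_succ]; exact congrArg Prod.snd h
    have key : ∀ c, f c = nxt G (f (c + 2)) (f (c + 1)) := by
      intro c
      refine nxt_unique G (hdeg _) (hadjf (c + 1)).symm (hadjf c).symm (hne2 c).symm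
    have h0 : f a = f b := by rw [key a, key b, h1, h2]
    have hga : g a = (f a, f (a + 1)) := by rw [f_succ]
    have hgb : g b = (f b, f (b + 1)) := by rw [f_succ]
    rw [hga, hgb, h0, h1]
  have hback_iter : ∀ k a b, g (a + k) = g (b + k) → g a = g b := by
    intro k
    induction k with
    | zero => intro a b h; exact h
    | succ k ih =>
      intro a b h
      apply ih
      apply hback
      rw [show a + k + 1 = a + (k + 1) by omega, show b + k + 1 = b + (k + 1) by omega]
      exact h
  -- existence of a period
  have hexp : ∃ q, 0 < q ∧ g q = g 0 := by
    obtain ⟨a, b, hab, h⟩ := Finite.exists_ne_map_eq_of_infinite g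
    rcases lt_or_gt_of_ne hab with hlt | hlt
    · refine ⟨b - a, by omega, ?_⟩
      apply hback_iter a
      rw [show b - a + a = b by omega, show 0 + a = a by omega]
      exact h.symm
    · refine ⟨a - b, by omega, ?_⟩
      apply hback_iter b
      rw [show a - b + b = a by omega, show 0 + b = b by omega]
      exact h
  obtain ⟨p, hp_pos, hgp, hp_min⟩ :
      ∃ p, 0 < p ∧ g p = g 0 ∧ ∀ q, 0 < q → q < p → g q ≠ g 0 := by
    refine ⟨Nat.find hexp, (Nat.find_spec hexp).1, (Nat.find_spec hexp).2, ?_⟩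
    intro q hq0 hqp hgq
    exact Nat.find_min hexp hqp ⟨hq0, hgq⟩
  clear hexp
  have hper : ∀ k, g (k + p) = g k := by
    intro k
    induction k with
    | zero => simpa using hgp
    | succ k ih =>
      rw [show k + 1 + p = (k + p) + 1 by omega, hg_succ, hg_succ, ih]
  have fper : ∀ k, f (k + p) = f k := fun k => congrArg Prod.fst (hper k)
  have fper_mul : ∀ j k, f (k + p * j) = f k := by
    intro j
    induction j with
    | zero => intro k; simp
    | succ j ih =>
      intro k
      rw [show k + p * (j + 1) = (k + p * j) + p by ring, fper, ih]
  haveI : NeZero p := ⟨hp_pos.ne'⟩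
  set F : ZMod p → V := fun x => f x.val with hF
  have Fcast : ∀ k : ℕ, F (k : ZMod p) = f k := by
    intro k
    show f ((k : ZMod p)).val = f k
    rw [ZMod.val_natCast]
    conv_rhs => rw [← Nat.mod_add_div k p]
    rw [fper_mul]
  have hvcast : ∀ x : ZMod p, ((x.val : ℕ) : ZMod p) = x := fun x =>
    ZMod.natCast_rightInverse x
  have FA : ∀ x : ZMod p, G.Adj (F x) (F (x + 1)) := by
    intro x
    have h1 : F x = f x.val := rfl
    have h2 : F (x + 1) = f (x.val + 1) := by
      rw [← Fcast (x.val + 1)]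
      push_cast
      rw [hvcast]
    rw [h1, h2]
    exact hadjf x.val
  have Fsub : ∀ x : ZMod p, F (x - 1) = f (x.val + (p - 1)) := by
    intro x
    rw [← Fcast (x.val + (p - 1))]
    congr 1
    push_cast [Nat.cast_sub hp_pos]
    rw [hvcast, ZMod.natCast_self]
    ring
  have FB : ∀ x : ZMod p, F (x + 1) ≠ F (x - 1) := by
    intro x
    have h2 : F (x + 1) = f (x.val + 1) := by
      rw [← Fcast (x.val + 1)]; push_cast; rw [hvcast]
    rw [h2, Fsub]
    have h3 : f (x.val + 1) = f ((x.val + (p - 1)) + 2) := by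
      rw [show (x.val + (p - 1)) + 2 = (x.val + 1) + p by omega, fper]
    rw [h3]
    exact hne2 _
  have FC : ∀ x : ZMod p, G.neighborFinset (F x) = {F (x - 1), F (x + 1)} := by
    intro x
    have h2 : F (x + 1) = f (x.val + 1) := by
      rw [← Fcast (x.val + 1)]; push_cast; rw [hvcast]
    have hx : F x = f ((x.val + (p - 1)) + 1) := by
      show f x.val = _
      rw [show (x.val + (p - 1)) + 1 = x.val + p by omega, fper]
    rw [hx, hnbrf, ← Fsub, h2,
      show (x.val + (p - 1)) + 2 = (x.val + 1) + p by omega, fper]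
  -- forward determinism at ZMod level
  have step_lem : ∀ z w : ZMod p, F z = F w → F (z + 1) = F (w + 1) →
      F (z + 2) = F (w + 2) := by
    intro z w h0 h1
    have hmem : F (z + 2) ∈ G.neighborFinset (F (w + 1)) := by
      rw [← h1, SimpleGraph.mem_neighborFinset]
      have := FA (z + 1)
      rwa [show z + 1 + 1 = z + 2 by ring] at this
    rw [FC (w + 1), show w + 1 - 1 = w by ring, show w + 1 + 1 = w + 2 by ring] at hmem
    rw [Finset.mem_insert, Finset.mem_singleton] at hmem
    rcases hmem with h | h
    · exfalso
      have := FB (z + 1)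
      rw [show z + 1 + 1 = z + 2 by ring, show z + 1 - 1 = z by ring] at this
      exact this (h.trans (h0.symm))
    · exact h
  have rev_lem : ∀ z w : ZMod p, F z = F w → F (z + 1) = F (w - 1) →
      F (z + 2) = F (w - 2) := by
    intro z w h0 h1
    have hmem : F (z + 2) ∈ G.neighborFinset (F (w - 1)) := by
      rw [← h1, SimpleGraph.mem_neighborFinset]
      have := FA (z + 1)
      rwa [show z + 1 + 1 = z + 2 by ring] at this
    rw [FC (w - 1), show w - 1 - 1 = w - 2 by ring, show w - 1 + 1 = w by ring] at hmem
    rw [Finset.mem_insert, Finset.mem_singleton] at hmem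
    rcases hmem with h | h
    · exact h
    · exfalso
      have := FB (z + 1)
      rw [show z + 1 + 1 = z + 2 by ring, show z + 1 - 1 = z by ring] at this
      exact this (h.trans (h0.symm))
  -- injectivity
  have Finj : Function.Injective F := by
    intro x y hxy
    by_contra hne
    by_cases hc : F (x + 1) = F (y + 1)
    · -- smaller period
      have hsame : ∀ k : ℕ, F (x + k) = F (y + k) ∧ F (x + k + 1) = F (y + k + 1) := by
        intro k
        induction k with
        | zero => exact ⟨by simpa using hxy, by simpa using hc⟩
        | succ k ih =>
          obtain ⟨ih1, ih2⟩ := ih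
          have h3 := step_lem (x + k) (y + k) ih1 ih2
          constructor
          · rw [show x + ((k + 1 : ℕ) : ZMod p) = x + k + 1 by push_cast; ring,
              show y + ((k + 1 : ℕ) : ZMod p) = y + k + 1 by push_cast; ring]
            exact ih2
          · rw [show x + ((k + 1 : ℕ) : ZMod p) + 1 = x + k + 2 by push_cast; ring,
              show y + ((k + 1 : ℕ) : ZMod p) + 1 = y + k + 2 by push_cast; ring]
            exact h3
      set d := (y - x).val with hd
      have hyx : y - x ≠ 0 := sub_ne_zero.mpr (Ne.symm hne)
      have hd0 : 0 < d :=
        Nat.pos_of_ne_zero (fun h => hyx ((ZMod.val_eq_zero _).mp h))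
      have hdp : d < p := ZMod.val_lt _
      have hk := hsame ((-x).val)
      have hxk : x + (((-x).val : ℕ) : ZMod p) = 0 := by rw [hvcast]; ring
      have hyk : y + (((-x).val : ℕ) : ZMod p) = ((d : ℕ) : ZMod p) := by
        rw [hvcast, hd, hvcast]; ring
      have hf0 : f 0 = f d := by
        rw [← Fcast 0, ← Fcast d]
        have h01 := hk.1
        rw [hxk, hyk] at h01
        simpa using h01
      have hf1 : f 1 = f (d + 1) := by
        rw [← Fcast 1, ← Fcast (d + 1)]
        have h02 := hk.2
        rw [hxk, hyk] at h02
        rw [show ((1:ℕ) : ZMod p) = 0 + 1 by push_cast; ring,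
          show ((d + 1 : ℕ) : ZMod p) = (d : ℕ) + 1 by push_cast; ring]
        exact h02
      have hgd : g d = g 0 := by
        have hga : g d = (f d, f (d + 1)) := by rw [f_succ]
        have hgb : g 0 = (f 0, f (0 + 1)) := by rw [f_succ]
        rw [hga, hgb, ← hf0, ← hf1]
      exact hp_min d hd0 hdp hgd
    · -- reversal
      have hbase1 : F (y + 1) = F (x - 1) := by
        have hmem : F (y + 1) ∈ G.neighborFinset (F x) := by
          rw [hxy, SimpleGraph.mem_neighborFinset]; exact FA y
        rw [FC x, Finset.mem_insert, Finset.mem_singleton] at hmem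
        rcases hmem with h | h
        · exact h
        · exact absurd h.symm hc
      have hrev : ∀ k : ℕ, F (y + k) = F (x - k) ∧ F (y + k + 1) = F (x - k - 1) := by
        intro k
        induction k with
        | zero => exact ⟨by simpa using hxy.symm, by simpa using hbase1⟩
        | succ k ih =>
          obtain ⟨ih1, ih2⟩ := ih
          have h3 := rev_lem (y + k) (x - k) ih1 ih2
          constructor
          · rw [show y + ((k + 1 : ℕ) : ZMod p) = y + k + 1 by push_cast; ring,
              show x - ((k + 1 : ℕ) : ZMod p) = x - k - 1 by push_cast; ring]
            exact ih2
          · rw [show y + ((k + 1 : ℕ) : ZMod p) + 1 = y + k + 2 by push_cast; ring,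
              show x - ((k + 1 : ℕ) : ZMod p) - 1 = x - k - 2 by push_cast; ring]
            exact h3
      rcases Nat.even_or_odd (x - y).val with ⟨t, ht⟩ | ⟨t, ht⟩
      · -- even : x = y + 2t
        have hx2 : x = y + 2 * (t : ZMod p) := by
          have hvc : (((x - y).val : ℕ) : ZMod p) = x - y := hvcast _
          rw [ht] at hvc
          push_cast at hvc
          linear_combination - hvc
        have h1 := (hrev t).2
        rw [show x - (t : ZMod p) - 1 = y + t - 1 by rw [hx2]; ring] at h1
        exact FB (y + t) h1
      · -- odd : x = y + 2t + 1
        have hx2 : x = y + 2 * (t : ZMod p) + 1 := by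
          have hvc : (((x - y).val : ℕ) : ZMod p) = x - y := hvcast _
          rw [ht] at hvc
          push_cast at hvc
          linear_combination - hvc
        have h1 := (hrev t).1
        rw [show x - (t : ZMod p) = y + t + 1 by rw [hx2]; ring] at h1
        exact (FA (y + t)).ne h1
  -- surjectivity
  have Fsurj : Function.Surjective F := by
    have hstep2 : ∀ (a b : V) (w : G.Walk a b), (∃ x, F x = a) → ∃ x, F x = b := by
      intro a b w
      induction w with
      | nil => exact id
      | cons h q ih =>
        rintro ⟨x, rfl⟩
        apply ih
        have hmem : _ ∈ G.neighborFinset (F x) := (SimpleGraph.mem_neighborFinset _ _ _).mpr h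
        rw [FC x, Finset.mem_insert, Finset.mem_singleton] at hmem
        rcases hmem with hm | hm
        · exact ⟨x - 1, hm.symm⟩
        · exact ⟨x + 1, hm.symm⟩
    intro u
    have h0 : F 0 = v0 := by
      show f ((0 : ZMod p)).val = v0
      rw [ZMod.val_zero]
      rfl
    obtain ⟨w⟩ := hconn.preconnected v0 u
    obtain ⟨x, hx⟩ := hstep2 v0 u w ⟨0, h0⟩
    exact ⟨x, hx⟩
  have Fbij : Function.Bijective F := ⟨Finj, Fsurj⟩
  have hpcard : p = m + 2 := by
    have := Fintype.card_of_bijective Fbij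
    rwa [ZMod.card, hcard] at this
  clear_value F
  clear hF Fsurj Finj hp_min hgp hper fper fper_mul Fcast hvcast Fsub hadjg hadjf hrec hne2
    hnbrf hback hback_iter hg_succ f_succ hdeg0 hv1 step_lem rev_lem FB
  clear_value g f step
  clear hg hf hstep g f step hp_pos
  subst hpcard
  -- build the isomorphism
  set e : ZMod (m + 2) ≃ V := Equiv.ofBijective F Fbij with he
  have he_apply : ∀ x, e x = F x := fun x => rfl
  refine ⟨⟨e.symm, ?_⟩⟩
  intro a b
  have ha : a = F (e.symm a) := by rw [← he_apply, Equiv.apply_symm_apply]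
  have hb : b = F (e.symm b) := by rw [← he_apply, Equiv.apply_symm_apply]
  set x := e.symm a
  set y := e.symm b
  show (cycleGraph (m + 2)).Adj x y ↔ G.Adj a b
  rw [ha, hb]
  constructor
  · intro h
    rw [cycleGraph_adj (u := x) (v := y)] at h
    rcases h with h | h
    · have hx : (x : ZMod (m + 2)) = y + 1 := by
        have : (x : ZMod (m+2)) - y = 1 := h
        linear_combination this
      rw [hx]
      exact (FA y).symm
    · have hy : (y : ZMod (m + 2)) = x + 1 := by
        have : (y : ZMod (m+2)) - x = 1 := h
        linear_combination this
      rw [hy]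
      exact FA x
  · intro h
    have hmem : F y ∈ G.neighborFinset (F x) := (SimpleGraph.mem_neighborFinset _ _ _).mpr h
    rw [FC x, Finset.mem_insert, Finset.mem_singleton] at hmem
    rw [cycleGraph_adj (u := x) (v := y)]
    rcases hmem with hm | hm
    · have : (y : ZMod (m + 2)) = x - 1 := Fbij.1 hm
      left
      show (x : ZMod (m + 2)) - y = 1
      rw [this]; ring
    · have : (y : ZMod (m + 2)) = x + 1 := Fbij.1 hm
      right
      show (y : ZMod (m + 2)) - x = 1
      rw [this]; ring

/-- **Theorem 3, first bullet.** For odd `n ≥ 4`, every `n`-vertex `3`-chromatic `2`-connected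
graph `G` satisfies `i_2(G) ≤ C(n,2) - n = i_2(C_n)`, with equality iff `G ≅ C_n`. -/
theorem max_indep_pairs_odd {V : Type*} [Fintype V] (n : ℕ) (hn : 4 ≤ n) (hodd : Odd n)
    (G : SimpleGraph V) (hcard : Fintype.card V = n)
    (hchrom : G.chromaticNumber = 3) (hconn : LConnected G 2) :
    numIndepSize (cycleGraph n) 2 = Nat.choose n 2 - n ∧
    numIndepSize G 2 ≤ Nat.choose n 2 - n ∧
      (numIndepSize G 2 = Nat.choose n 2 - n ↔ Nonempty (G ≃g cycleGraph n)) := by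
  classical
  obtain ⟨m, rfl⟩ : ∃ m, n = m + 4 := ⟨n - 4, by omega⟩
  haveI : DecidableRel G.Adj := Classical.decRel _
  haveI : DecidableEq V := Classical.decEq V
  have hcyc_cnt := count_lemma (cycleGraph (m + 4))
  have hcycE : (cycleGraph (m + 4)).edgeFinset.card = m + 4 := cycle_edge_count (m + 1)
  rw [Fintype.card_fin, hcycE] at hcyc_cnt
  have hGcnt := count_lemma G
  have hd2 : ∀ v, 2 ≤ G.degree v := min_degree_two G (by omega) hconn
  have hEge : Fintype.card V ≤ G.edgeFinset.card := G_edge_count_ge G hd2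
  rw [hcard] at hGcnt hEge
  refine ⟨by omega, by omega, ?_, ?_⟩
  · intro heq
    have hEeq : G.edgeFinset.card = m + 4 := by omega
    have hdeg2 : ∀ v, G.degree v = 2 := G_deg_eq_two G hd2 (by rw [hcard]; exact hEeq)
    have hGconn : G.Connected := by
      have h := hconn.2 ∅ (by norm_num)
      rw [Finset.coe_empty, Set.compl_empty] at h
      exact (SimpleGraph.induceUnivIso G).connected_iff.mp h
    exact cycle_iso G hGconn hdeg2 (m + 2) (by omega)
  · rintro ⟨iso⟩
    have hEeq : G.edgeFinset.card = (cycleGraph (m + 4)).edgeFinset.card :=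
      iso.card_edgeFinset_eq
    rw [hcycE] at hEeq
    omega
end

section
/- Let n ≥ 4 and let G be an n-vertex 3-chromatic 2-connected simple graph. Then for every t with 3 ≤ t ≤ n−2, i_t(G) ≤ i_t(K_2 ∨ E_{n−2}); moreover, if n ≥ 5, then equality holds if and only if G is isomorphic to K_2 ∨ E_{n−2}. -/
open SimpleGraph

/-- The graph `K_2 ∨ E_{n-2}` on `Fin n`: the first two vertices are adjacent to each other and
to all other vertices; the remaining `n-2` vertices form an independent set. -/
def K2JoinE (n : ℕ) : SimpleGraph (Fin n) where
  Adj i j := i ≠ j ∧ ((i : ℕ) < 2 ∨ (j : ℕ) < 2)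
  symm := ⟨by rintro i j ⟨h1, h2⟩; exact ⟨h1.symm, by tauto⟩⟩
  loopless := ⟨by rintro i ⟨h, -⟩; exact h rfl⟩

open Finset

section Aux

attribute [local instance] Classical.propDecidable

variable {V : Type*} [Fintype V] [DecidableEq V]

/-- independence of a finset -/
def IndepS {V : Type*} (G : SimpleGraph V) (s : Finset V) : Prop :=
  ∀ a ∈ s, ∀ b ∈ s, ¬ G.Adj a b

noncomputable def fam (G : SimpleGraph V) (t : ℕ) : Finset (Finset V) :=
  univ.filter fun s => s.card = t ∧ IndepS G s

lemma numIndepSize_eq_fam (G : SimpleGraph V) (t : ℕ) :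
    numIndepSize G t = (fam G t).card := by
  rw [numIndepSize, Nat.card_eq_fintype_card]
  exact Fintype.card_of_subtype _ (fun s => by rw [fam, Finset.mem_filter]; simp [IndepS])

lemma numIndepSize_iso {V W : Type*} [Fintype V] [Fintype W] {G : SimpleGraph V}
    {H : SimpleGraph W} (e : G ≃g H) (t : ℕ) : numIndepSize G t = numIndepSize H t := by
  unfold numIndepSize
  apply Nat.card_congr
  refine ⟨fun s => ⟨s.1.map e.toEquiv.toEmbedding, ?_, ?_⟩,
          fun s => ⟨s.1.map e.symm.toEquiv.toEmbedding, ?_, ?_⟩, ?_, ?_⟩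
  · rw [Finset.card_map]; exact s.2.1
  · rintro a ha b hb
    simp only [Finset.mem_map, Equiv.coe_toEmbedding] at ha hb
    obtain ⟨a0, ha0, rfl⟩ := ha
    obtain ⟨b0, hb0, rfl⟩ := hb
    show ¬ H.Adj (e a0) (e b0)
    rw [e.map_adj_iff]
    exact s.2.2 a0 ha0 b0 hb0
  · rw [Finset.card_map]; exact s.2.1
  · rintro a ha b hb
    simp only [Finset.mem_map, Equiv.coe_toEmbedding] at ha hb
    obtain ⟨a0, ha0, rfl⟩ := ha
    obtain ⟨b0, hb0, rfl⟩ := hb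
    show ¬ G.Adj (e.symm a0) (e.symm b0)
    rw [e.symm.map_adj_iff]
    exact s.2.2 a0 ha0 b0 hb0
  · rintro ⟨s, hs⟩
    ext a
    simp only [Finset.mem_map, Equiv.coe_toEmbedding]
    constructor
    · rintro ⟨b, ⟨c, hc, rfl⟩, rfl⟩
      simpa using hc
    · intro ha
      exact ⟨e.toEquiv a, ⟨a, ha, rfl⟩, by simp⟩
  · rintro ⟨s, hs⟩
    ext a
    simp only [Finset.mem_map, Equiv.coe_toEmbedding]
    constructor
    · rintro ⟨b, ⟨c, hc, rfl⟩, rfl⟩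
      simpa using hc
    · intro ha
      exact ⟨e.symm.toEquiv a, ⟨a, ha, rfl⟩, by simp⟩

end Aux
section K2E

attribute [local instance] Classical.propDecidable

lemma K2JoinE_fam (n t : ℕ) (ht : 2 ≤ t) :
    fam (K2JoinE n) t = (univ.filter (fun i : Fin n => 2 ≤ (i : ℕ))).powersetCard t := by
  ext s
  simp only [fam, mem_filter, mem_univ, true_and, mem_powersetCard]
  constructor
  · rintro ⟨hcard, hind⟩
    refine ⟨?_, hcard⟩
    intro i hi
    simp only [mem_filter, mem_univ, true_and]
    by_contra hlt
    push_neg at hlt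
    obtain ⟨j, hj, hne⟩ := Finset.exists_mem_ne (by omega : 1 < s.card) i
    exact hind j hj i hi ⟨hne, Or.inr hlt⟩
  · rintro ⟨hsub, hcard⟩
    refine ⟨hcard, ?_⟩
    intro a ha b hb hadj
    obtain ⟨-, h2⟩ := hadj
    have ha2 := (mem_filter.mp (hsub ha)).2
    have hb2 := (mem_filter.mp (hsub hb)).2
    omega

lemma K2JoinE_W_card (n : ℕ) (hn : 2 ≤ n) :
    (univ.filter (fun i : Fin n => 2 ≤ (i : ℕ))).card = n - 2 := by
  have h2 : (univ.filter (fun i : Fin n => ¬ 2 ≤ (i : ℕ))).card = 2 := by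
    have : (univ.filter (fun i : Fin n => ¬ 2 ≤ (i : ℕ)))
        = {(⟨0, by omega⟩ : Fin n), ⟨1, by omega⟩} := by
      ext i
      simp only [mem_filter, mem_univ, true_and, mem_insert, mem_singleton, Fin.ext_iff]
      omega
    rw [this]
    rw [Finset.card_insert_of_notMem (by simp [Fin.ext_iff]), Finset.card_singleton]
  have := Finset.card_filter_add_card_filter_not
    (s := (univ : Finset (Fin n))) (p := fun i : Fin n => 2 ≤ (i : ℕ))
  rw [Finset.card_univ, Fintype.card_fin] at this
  omega

lemma K2JoinE_count (n t : ℕ) (hn : 2 ≤ n) (ht : 2 ≤ t) :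
    numIndepSize (K2JoinE n) t = (n - 2).choose t := by
  classical
  rw [numIndepSize_eq_fam, K2JoinE_fam n t ht, Finset.card_powersetCard,
    K2JoinE_W_card n hn]

end K2E
section MinDeg
set_option linter.unusedSectionVars false

attribute [local instance] Classical.propDecidable

variable {V : Type*} [Fintype V] [DecidableEq V]

noncomputable def nbr (G : SimpleGraph V) (v : V) : Finset V :=
  univ.filter (fun w => G.Adj v w)

lemma mem_nbr {G : SimpleGraph V} {v w : V} : w ∈ nbr G v ↔ G.Adj v w := by
  simp [nbr]

lemma minDeg_of_LConnected {G : SimpleGraph V} (hcard : 4 ≤ Fintype.card V)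
    (h : LConnected G 2) (v : V) : 2 ≤ (nbr G v).card := by
  by_contra hlt
  push_neg at hlt
  have hs2 : (nbr G v).card < 2 := hlt
  have hconn := h.2 (nbr G v) hs2
  -- find w distinct from v outside nbr G v
  have hbig : 0 < (univ \ insert v (nbr G v)).card := by
    have h1 : (insert v (nbr G v)).card ≤ 2 := by
      calc (insert v (nbr G v)).card ≤ (nbr G v).card + 1 := Finset.card_insert_le _ _
        _ ≤ 2 := by omega
    have h2 : (univ : Finset V).card = Fintype.card V := Finset.card_univ
    have h3 := Finset.le_card_sdiff (insert v (nbr G v)) (univ : Finset V)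
    omega
  obtain ⟨w, hw⟩ := Finset.card_pos.mp hbig
  simp only [Finset.mem_sdiff, Finset.mem_insert, Finset.mem_univ, true_and] at hw
  push_neg at hw
  obtain ⟨hwv, hwnbr⟩ := hw
  have hv : v ∈ ((↑(nbr G v) : Set V)ᶜ) := by
    simp only [Set.mem_compl_iff, Finset.coe_sort_coe, Finset.mem_coe]
    intro hm
    exact G.loopless.irrefl v (mem_nbr.mp hm)
  have hw' : w ∈ ((↑(nbr G v) : Set V)ᶜ) := by
    simp only [Set.mem_compl_iff, Finset.mem_coe]
    exact hwnbr
  obtain ⟨p⟩ := hconn.preconnected ⟨v, hv⟩ ⟨w, hw'⟩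
  have hne : (⟨v, hv⟩ : ((↑(nbr G v) : Set V)ᶜ : Set V)) ≠ ⟨w, hw'⟩ := by
    simp [Subtype.ext_iff]; exact fun hh => hwv hh.symm
  -- first step of the walk gives a neighbor of v outside nbr G v
  cases p with
  | nil => exact hne rfl
  | @cons _ b _ hadj p' =>
      have : G.Adj v ↑b := by
        simpa using hadj
      exact b.2 (mem_nbr.mpr this)

end MinDeg
section StepLemma

set_option linter.unusedSectionVars false
attribute [local instance] Classical.propDecidable

variable {V : Type*} [Fintype V] [DecidableEq V]

lemma fam_mem_card {G : SimpleGraph V} {t : ℕ} {s : Finset V} (hs : s ∈ fam G t) :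
    s.card = t := (Finset.mem_filter.mp hs).2.1

lemma fam_mem_indep {G : SimpleGraph V} {t : ℕ} {s : Finset V} (hs : s ∈ fam G t) :
    IndepS G s := (Finset.mem_filter.mp hs).2.2

lemma step_lemma (G : SimpleGraph V) (hδ : ∀ v, 2 ≤ (nbr G v).card) {t : ℕ} (ht : 3 ≤ t) :
    t * (fam G t).card ≤ (Fintype.card V - t - 1) * (fam G (t - 1)).card := by
  set n := Fintype.card V with hn
  set Q : Finset (Finset V × V) :=
    univ.filter (fun q => q.1 ∈ fam G t ∧ q.2 ∈ q.1) with hQ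
  -- |Q| = t * |fam G t|
  have hQ1 : Q.card = t * (fam G t).card := by
    rw [Finset.card_eq_sum_card_fiberwise (f := Prod.fst) (t := fam G t)
      (fun q hq => (Finset.mem_filter.mp hq).2.1)]
    rw [Finset.sum_congr rfl (fun s hs => ?_), Finset.sum_const, smul_eq_mul, mul_comm]
    show (Q.filter (fun q => q.1 = s)).card = t
    rw [← fam_mem_card hs]
    apply Finset.card_bij (fun q _ => q.2)
    · rintro ⟨s', x⟩ hq
      simp only [Finset.mem_filter, hQ, Finset.mem_univ, true_and] at hq
      obtain ⟨⟨h1, h2⟩, rfl⟩ := hq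
      exact h2
    · rintro ⟨s1, x1⟩ hq1 ⟨s2, x2⟩ hq2 hx
      simp only [Finset.mem_filter, hQ, Finset.mem_univ, true_and] at hq1 hq2
      simp only [Prod.mk.injEq]
      exact ⟨hq1.2.trans hq2.2.symm, hx⟩
    · intro x hx
      exact ⟨(s, x), by simp [hQ, hs, hx], rfl⟩
  -- |Q| ≤ (n - t - 1) * |fam G (t-1)|
  have hQ2 : Q.card ≤ (n - t - 1) * (fam G (t - 1)).card := by
    have hmapsto : ∀ q ∈ Q, q.1.erase q.2 ∈ fam G (t - 1) := by
      rintro ⟨s, x⟩ hq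
      simp only [Finset.mem_filter, hQ, Finset.mem_univ, true_and] at hq
      obtain ⟨hs, hx⟩ := hq
      simp only [fam, Finset.mem_filter, Finset.mem_univ, true_and]
      constructor
      · rw [Finset.card_erase_of_mem hx, fam_mem_card hs]
      · intro a ha b hb
        exact fam_mem_indep hs a (Finset.mem_of_mem_erase ha) b (Finset.mem_of_mem_erase hb)
    rw [Finset.card_eq_sum_card_fiberwise (f := fun q : Finset V × V => q.1.erase q.2)
      (t := fam G (t - 1)) (fun q hq => hmapsto q hq)]
    have hbound : ∀ s' ∈ fam G (t - 1),
        (Q.filter (fun q => q.1.erase q.2 = s')).card ≤ n - t - 1 := by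
      intro s' hs'
      -- pick an element of s' and two of its neighbors
      have hcard' : s'.card = t - 1 := fam_mem_card hs'
      have hne : s'.Nonempty := by rw [← Finset.card_pos, hcard']; omega
      obtain ⟨s0, hs0⟩ := hne
      obtain ⟨w1, hw1, w2, hw2, hww⟩ := Finset.one_lt_card.mp
        (by have := hδ s0; omega : 1 < (nbr G s0).card)
      have hw1adj : G.Adj s0 w1 := mem_nbr.mp hw1
      have hw2adj : G.Adj s0 w2 := mem_nbr.mp hw2
      have hw1s' : w1 ∉ s' := fun hmem => fam_mem_indep hs' s0 hs0 w1 hmem hw1adj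
      have hw2s' : w2 ∉ s' := fun hmem => fam_mem_indep hs' s0 hs0 w2 hmem hw2adj
      have hXcard : (insert w1 (insert w2 s')).card = t + 1 := by
        rw [Finset.card_insert_of_notMem (by simp [hww, hw1s']),
          Finset.card_insert_of_notMem hw2s', hcard']
        omega
      calc (Q.filter (fun q => q.1.erase q.2 = s')).card
          ≤ (univ \ insert w1 (insert w2 s')).card := by
            apply Finset.card_le_card_of_injOn (fun q => q.2)
            · rintro ⟨s, x⟩ hq
              simp only [Finset.mem_coe, Finset.mem_filter, hQ, Finset.mem_univ, true_and] at hq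
              obtain ⟨⟨hs, hx⟩, herase⟩ := hq
              have hxs' : x ∉ s' := by rw [← herase]; simp
              have hs0s : s0 ∈ s := by
                rw [← herase] at hs0; exact Finset.mem_of_mem_erase hs0
              have hxw1 : x ≠ w1 := by
                rintro rfl; exact fam_mem_indep hs s0 hs0s x hx hw1adj
              have hxw2 : x ≠ w2 := by
                rintro rfl; exact fam_mem_indep hs s0 hs0s x hx hw2adj
              simp only [Finset.mem_coe, Finset.mem_sdiff, Finset.mem_univ, true_and, Finset.mem_insert]
              push_neg
              exact ⟨hxw1, hxw2, hxs'⟩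
            · rintro ⟨s1, x1⟩ hq1 ⟨s2, x2⟩ hq2 hx
              simp only [Finset.coe_filter, Set.mem_setOf_eq, Finset.mem_filter, hQ,
                Finset.mem_univ, true_and] at hq1 hq2
              obtain ⟨⟨hs1, hx1⟩, he1⟩ := hq1
              obtain ⟨⟨hs2, hx2⟩, he2⟩ := hq2
              simp only at hx
              subst hx
              have : s1 = s2 := by
                rw [← Finset.insert_erase hx1, ← Finset.insert_erase hx2, he1, he2]
              simp [this]
        _ = n - (t + 1) := by
            rw [Finset.card_sdiff_of_subset (Finset.subset_univ _), Finset.card_univ, hXcard]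
        _ = n - t - 1 := by omega
    calc ∑ s' ∈ fam G (t-1), (Q.filter (fun q => q.1.erase q.2 = s')).card
        ≤ ∑ _s' ∈ fam G (t-1), (n - t - 1) := Finset.sum_le_sum hbound
      _ = (n - t - 1) * (fam G (t-1)).card := by rw [Finset.sum_const, smul_eq_mul, mul_comm]
  omega

end StepLemma
section Master

set_option linter.unusedSectionVars false
set_option maxHeartbeats 1000000
attribute [local instance] Classical.propDecidable

variable {V : Type*} [Fintype V] [DecidableEq V]

noncomputable def nbrW (G : SimpleGraph V) (W : Finset V) (v : V) : Finset V :=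
  W.filter (fun w => G.Adj v w)

noncomputable def nnbrW (G : SimpleGraph V) (W : Finset V) (v : V) : Finset V :=
  W.filter (fun w => w ≠ v ∧ ¬ G.Adj v w)

noncomputable def famW (G : SimpleGraph V) (W : Finset V) (t : ℕ) : Finset (Finset V) :=
  (W.powersetCard t).filter (IndepS G)

lemma fam_eq_famW_univ (G : SimpleGraph V) (t : ℕ) : fam G t = famW G univ t := by
  ext s
  simp [fam, famW, Finset.mem_powersetCard, Finset.subset_univ, and_comm]

/-- vertex partition : `|W| = 1 + deg + nondeg` for `v ∈ W` -/
lemma card_partition (G : SimpleGraph V) (W : Finset V) {v : V} (hv : v ∈ W) :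
    W.card = 1 + (nbrW G W v).card + (nnbrW G W v).card := by
  have h1 := Finset.card_filter_add_card_filter_not
    (s := W) (p := fun w => G.Adj v w)
  have h2 := Finset.card_filter_add_card_filter_not
    (s := W.filter (fun w => ¬ G.Adj v w)) (p := fun w => w ≠ v)
  rw [Finset.filter_filter, Finset.filter_filter] at h2
  have h3 : W.filter (fun w => ¬ G.Adj v w ∧ ¬ w ≠ v) = {v} := by
    ext w
    simp only [Finset.mem_filter, Finset.mem_singleton, not_not]
    constructor
    · rintro ⟨-, -, rfl⟩; rfl
    · intro h
      exact ⟨by rw [h]; exact hv, by rw [h]; exact G.loopless.irrefl v, h⟩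
  have h4 : nnbrW G W v = W.filter (fun w => ¬ G.Adj v w ∧ w ≠ v) := by
    ext w; simp [nnbrW, and_comm]
  rw [h3, Finset.card_singleton] at h2
  rw [h4]
  rw [← h1, ← h2]
  simp [nbrW]
  omega

/-- the set of ordered distinct triples from `W` -/
noncomputable def allT (G : SimpleGraph V) (W : Finset V) : Finset (V × V × V) :=
  (W ×ˢ (W ×ˢ W)).filter (fun p => p.1 ≠ p.2.1 ∧ p.1 ≠ p.2.2 ∧ p.2.1 ≠ p.2.2)

noncomputable def indT (G : SimpleGraph V) (W : Finset V) : Finset (V × V × V) :=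
  (allT G W).filter (fun p => ¬ G.Adj p.1 p.2.1 ∧ ¬ G.Adj p.1 p.2.2 ∧ ¬ G.Adj p.2.1 p.2.2)

noncomputable def depT (G : SimpleGraph V) (W : Finset V) : Finset (V × V × V) :=
  (allT G W).filter (fun p => ¬ (¬ G.Adj p.1 p.2.1 ∧ ¬ G.Adj p.1 p.2.2 ∧ ¬ G.Adj p.2.1 p.2.2))

noncomputable def PT (G : SimpleGraph V) (W : Finset V) : Finset (V × V × V) :=
  (W ×ˢ (W ×ˢ W)).filter (fun p => G.Adj p.1 p.2.1 ∧ ¬ G.Adj p.1 p.2.2 ∧ p.2.2 ≠ p.1)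

lemma depT_add_indT (G : SimpleGraph V) (W : Finset V) :
    (depT G W).card + (indT G W).card = (allT G W).card := by
  have := Finset.card_filter_add_card_filter_not (s := allT G W)
    (p := fun p => ¬ G.Adj p.1 p.2.1 ∧ ¬ G.Adj p.1 p.2.2 ∧ ¬ G.Adj p.2.1 p.2.2)
  rw [← this, indT, depT]
  omega

lemma nat_sq_sub (a : ℕ) : a * a - a = a * (a - 1) := by
  cases a with
  | zero => rfl
  | succ b => simp [Nat.succ_sub_one, Nat.mul_sub, Nat.succ_mul, Nat.mul_succ]

lemma allT_card (G : SimpleGraph V) (W : Finset V) :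
    (allT G W).card = W.card * ((W.card - 1) * (W.card - 2)) := by
  have hmap : ∀ p ∈ allT G W, p.1 ∈ W := fun p hp =>
    (Finset.mem_product.mp (Finset.mem_filter.mp hp).1).1
  rw [Finset.card_eq_sum_card_fiberwise hmap]
  have hfib : ∀ v ∈ W, ((allT G W).filter (fun p => p.1 = v)).card
      = (W.card - 1) * (W.card - 2) := by
    intro v hv
    have : ((allT G W).filter (fun p => p.1 = v)).card = ((W.erase v).offDiag).card := by
      apply Finset.card_bij (fun p _ => p.2)
      · rintro ⟨a, y, z⟩ hp
        simp only [allT, Finset.mem_filter, Finset.mem_product] at hp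
        obtain ⟨⟨⟨-, hy, hz⟩, h1, h2, h3⟩, rfl⟩ := hp
        exact Finset.mem_offDiag.mpr ⟨Finset.mem_erase.mpr ⟨fun h => h1 h.symm, hy⟩,
          Finset.mem_erase.mpr ⟨fun h => h2 h.symm, hz⟩, h3⟩
      · rintro ⟨a1, p1⟩ hp1 ⟨a2, p2⟩ hp2 hp
        simp only [allT, Finset.mem_filter] at hp1 hp2
        simp only at hp
        simp [Prod.ext_iff, hp, hp1.2, hp2.2]
      · rintro ⟨y, z⟩ hyz
        obtain ⟨hy, hz, hyzne⟩ := Finset.mem_offDiag.mp hyz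
        refine ⟨(v, y, z), Finset.mem_filter.mpr ⟨?_, rfl⟩, rfl⟩
        exact Finset.mem_filter.mpr ⟨Finset.mem_product.mpr
          ⟨hv, Finset.mem_product.mpr ⟨Finset.mem_of_mem_erase hy, Finset.mem_of_mem_erase hz⟩⟩,
          fun h => (Finset.mem_erase.mp hy).1 h.symm,
          fun h => (Finset.mem_erase.mp hz).1 h.symm, hyzne⟩
    rw [this, Finset.offDiag_card, Finset.card_erase_of_mem hv, nat_sq_sub]
    congr 1
  rw [Finset.sum_congr rfl hfib, Finset.sum_const, smul_eq_mul]

lemma PT_card (G : SimpleGraph V) (W : Finset V) :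
    (PT G W).card = ∑ v ∈ W, (nbrW G W v).card * (nnbrW G W v).card := by
  have hmap : ∀ p ∈ PT G W, p.1 ∈ W := fun p hp =>
    (Finset.mem_product.mp (Finset.mem_filter.mp hp).1).1
  rw [Finset.card_eq_sum_card_fiberwise hmap]
  apply Finset.sum_congr rfl
  intro v hv
  have : ((PT G W).filter (fun p => p.1 = v)).card
      = ((nbrW G W v) ×ˢ (nnbrW G W v)).card := by
    apply Finset.card_bij (fun p _ => p.2)
    · rintro ⟨a, y, z⟩ hp
      simp only [PT, Finset.mem_filter, Finset.mem_product] at hp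
      obtain ⟨⟨⟨-, hy, hz⟩, h1, h2, h3⟩, rfl⟩ := hp
      simp only [Finset.mem_product, nbrW, nnbrW, Finset.mem_filter]
      exact ⟨⟨hy, h1⟩, ⟨hz, h3, h2⟩⟩
    · rintro ⟨a1, p1⟩ hp1 ⟨a2, p2⟩ hp2 hp
      simp only [PT, Finset.mem_filter] at hp1 hp2
      simp only at hp
      simp [Prod.ext_iff, hp, hp1.2, hp2.2]
    · rintro ⟨y, z⟩ hyz
      simp only [Finset.mem_product, nbrW, nnbrW, Finset.mem_filter] at hyz
      obtain ⟨⟨hy, hadj⟩, hz, hzv, hnadj⟩ := hyz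
      refine ⟨(v, y, z), Finset.mem_filter.mpr ⟨?_, rfl⟩, rfl⟩
      exact Finset.mem_filter.mpr ⟨Finset.mem_product.mpr ⟨hv, Finset.mem_product.mpr ⟨hy, hz⟩⟩,
        hadj, hnadj, hzv⟩
  rw [this, Finset.card_product]

end Master
section Master2

set_option linter.unusedSectionVars false
set_option maxHeartbeats 1000000
attribute [local instance] Classical.propDecidable

variable {V : Type*} [Fintype V] [DecidableEq V]

lemma mem_indT (G : SimpleGraph V) (W : Finset V) {a b c : V} (ha : a ∈ W) (hb : b ∈ W)
    (hc : c ∈ W) (hab : a ≠ b) (hac : a ≠ c) (hbc : b ≠ c) (nab : ¬ G.Adj a b)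
    (nac : ¬ G.Adj a c) (nbc : ¬ G.Adj b c) : (a, b, c) ∈ indT G W := by
  simp only [indT, allT, Finset.mem_filter, Finset.mem_product]
  exact ⟨⟨⟨ha, hb, hc⟩, hab, hac, hbc⟩, nab, nac, nbc⟩

lemma mem_depT (G : SimpleGraph V) (W : Finset V) {a b c : V} (ha : a ∈ W) (hb : b ∈ W)
    (hc : c ∈ W) (hab : a ≠ b) (hac : a ≠ c) (hbc : b ≠ c)
    (he : G.Adj a b ∨ G.Adj a c ∨ G.Adj b c) : (a, b, c) ∈ depT G W := by
  simp only [depT, allT, Finset.mem_filter, Finset.mem_product, not_and_or, not_not]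
  exact ⟨⟨⟨ha, hb, hc⟩, hab, hac, hbc⟩, by tauto⟩

lemma triple_mem_famW (G : SimpleGraph V) (W : Finset V) {a b c : V} (ha : a ∈ W) (hb : b ∈ W)
    (hc : c ∈ W) (hab : a ≠ b) (hac : a ≠ c) (hbc : b ≠ c) (nab : ¬ G.Adj a b)
    (nac : ¬ G.Adj a c) (nbc : ¬ G.Adj b c) : ({a, b, c} : Finset V) ∈ famW G W 3 := by
  simp only [famW, Finset.mem_filter, Finset.mem_powersetCard]
  refine ⟨⟨?_, ?_⟩, ?_⟩
  · intro x hx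
    simp only [Finset.mem_insert, Finset.mem_singleton] at hx
    rcases hx with rfl | rfl | rfl <;> assumption
  · rw [Finset.card_insert_of_notMem (by simp [hab, hac]),
      Finset.card_insert_of_notMem (by simp [hbc]), Finset.card_singleton]
  · intro x hx y hy
    simp only [Finset.mem_insert, Finset.mem_singleton] at hx hy
    rcases hx with rfl | rfl | rfl <;> rcases hy with rfl | rfl | rfl <;>
      first
        | exact G.loopless.irrefl _
        | assumption
        | exact fun h => nab h.symm
        | exact fun h => nac h.symm
        | exact fun h => nbc h.symm

lemma indT_fiber (G : SimpleGraph V) (W : Finset V) {s : Finset V} (hs : s ∈ famW G W 3) :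
    ((indT G W).filter (fun p => ({p.1, p.2.1, p.2.2} : Finset V) = s)).card = 6 := by
  have hmem := Finset.mem_filter.mp hs
  have hpc := Finset.mem_powersetCard.mp hmem.1
  have hind := hmem.2
  obtain ⟨x, y, z, hxy, hxz, hyz, rfl⟩ := Finset.card_eq_three.mp hpc.2
  have hxW : x ∈ W := hpc.1 (by simp)
  have hyW : y ∈ W := hpc.1 (by simp)
  have hzW : z ∈ W := hpc.1 (by simp)
  have nxy : ¬ G.Adj x y := hind x (by simp) y (by simp)
  have nxz : ¬ G.Adj x z := hind x (by simp) z (by simp)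
  have nyz : ¬ G.Adj y z := hind y (by simp) z (by simp)
  have nyx : ¬ G.Adj y x := fun h => nxy h.symm
  have nzx : ¬ G.Adj z x := fun h => nxz h.symm
  have nzy : ¬ G.Adj z y := fun h => nyz h.symm
  have hL : (indT G W).filter (fun p => ({p.1, p.2.1, p.2.2} : Finset V) = {x, y, z})
      = {(x,y,z), (x,z,y), (y,x,z), (y,z,x), (z,x,y), (z,y,x)} := by
    ext ⟨a, b, c⟩
    simp only [Finset.mem_filter, Finset.mem_insert, Finset.mem_singleton, Prod.mk.injEq]
    constructor
    · rintro ⟨hmemT, hset⟩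
      simp only [indT, allT, Finset.mem_filter, Finset.mem_product] at hmemT
      obtain ⟨⟨⟨-, -, -⟩, d1, d2, d3⟩, -⟩ := hmemT
      have h1 : a ∈ ({x, y, z} : Finset V) := by rw [← hset]; simp
      have h2 : b ∈ ({x, y, z} : Finset V) := by rw [← hset]; simp
      have h3 : c ∈ ({x, y, z} : Finset V) := by rw [← hset]; simp
      simp only [Finset.mem_insert, Finset.mem_singleton] at h1 h2 h3
      rcases h1 with rfl | rfl | rfl <;> rcases h2 with rfl | rfl | rfl <;>
        rcases h3 with rfl | rfl | rfl <;> simp_all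
    · have hxyz : ({x, y, z} : Finset V) = {x, y, z} := rfl
      have hxzy : ({x, z, y} : Finset V) = {x, y, z} := by
        ext w; simp only [Finset.mem_insert, Finset.mem_singleton]; tauto
      have hyxz : ({y, x, z} : Finset V) = {x, y, z} := by
        ext w; simp only [Finset.mem_insert, Finset.mem_singleton]; tauto
      have hyzx : ({y, z, x} : Finset V) = {x, y, z} := by
        ext w; simp only [Finset.mem_insert, Finset.mem_singleton]; tauto
      have hzxy : ({z, x, y} : Finset V) = {x, y, z} := by
        ext w; simp only [Finset.mem_insert, Finset.mem_singleton]; tauto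
      have hzyx : ({z, y, x} : Finset V) = {x, y, z} := by
        ext w; simp only [Finset.mem_insert, Finset.mem_singleton]; tauto
      rintro (⟨rfl, rfl, rfl⟩ | ⟨rfl, rfl, rfl⟩ | ⟨rfl, rfl, rfl⟩ | ⟨rfl, rfl, rfl⟩ |
        ⟨rfl, rfl, rfl⟩ | ⟨rfl, rfl, rfl⟩)
      · exact ⟨mem_indT G W hxW hyW hzW hxy hxz hyz nxy nxz nyz, hxyz⟩
      · exact ⟨mem_indT G W hxW hzW hyW hxz hxy (Ne.symm hyz) nxz nxy nzy, hxzy⟩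
      · exact ⟨mem_indT G W hyW hxW hzW (Ne.symm hxy) hyz hxz nyx nyz nxz, hyxz⟩
      · exact ⟨mem_indT G W hyW hzW hxW hyz (Ne.symm hxy) (Ne.symm hxz) nyz nyx nzx, hyzx⟩
      · exact ⟨mem_indT G W hzW hxW hyW (Ne.symm hxz) (Ne.symm hyz) hxy nzx nzy nxy, hzxy⟩
      · exact ⟨mem_indT G W hzW hyW hxW (Ne.symm hyz) (Ne.symm hxz) (Ne.symm hxy) nzy nzx nyx,
          hzyx⟩
  rw [hL]
  have e1 : ((x,y,z) : V×V×V) ≠ (x,z,y) := by simp [Prod.ext_iff]; intro h; exact fun _ => hyz h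
  rw [Finset.card_insert_of_notMem (by simp [Prod.ext_iff]; tauto),
    Finset.card_insert_of_notMem (by simp [Prod.ext_iff]; tauto),
    Finset.card_insert_of_notMem (by simp [Prod.ext_iff]; tauto),
    Finset.card_insert_of_notMem (by simp [Prod.ext_iff]; tauto),
    Finset.card_insert_of_notMem (by simp [Prod.ext_iff]; tauto),
    Finset.card_singleton]

lemma indT_card (G : SimpleGraph V) (W : Finset V) :
    (indT G W).card = 6 * (famW G W 3).card := by
  have hmap : ∀ p ∈ indT G W, ({p.1, p.2.1, p.2.2} : Finset V) ∈ famW G W 3 := by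
    rintro ⟨a, b, c⟩ hp
    simp only [indT, allT, Finset.mem_filter, Finset.mem_product] at hp
    obtain ⟨⟨⟨ha, hb, hc⟩, d1, d2, d3⟩, n1, n2, n3⟩ := hp
    exact triple_mem_famW G W ha hb hc d1 d2 d3 n1 n2 n3
  rw [Finset.card_eq_sum_card_fiberwise hmap,
    Finset.sum_congr rfl (fun s hs => indT_fiber G W hs), Finset.sum_const, smul_eq_mul,
    mul_comm]

end Master2
section Master3

set_option linter.unusedSectionVars false
set_option maxHeartbeats 1000000
attribute [local instance] Classical.propDecidable

variable {V : Type*} [Fintype V] [DecidableEq V]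

noncomputable def PhiT (G : SimpleGraph V) : ℕ × (V × V × V) → V × V × V := fun q =>
  if q.1 = 0 then q.2
  else if q.1 = 1 then (q.2.1, q.2.2.2, q.2.2.1)
  else if G.Adj q.2.2.1 q.2.2.2 then (q.2.2.1, q.2.2.2, q.2.1)
  else (q.2.2.2, q.2.2.1, q.2.1)

noncomputable def PsiT (G : SimpleGraph V) : V × V × V → ℕ × (V × V × V) := fun p =>
  if G.Adj p.1 p.2.1 then
    (if G.Adj p.1 p.2.2 then (2, (p.2.2, p.1, p.2.1)) else (0, p))
  else
    (if G.Adj p.1 p.2.2 then (1, (p.1, p.2.2, p.2.1)) else (2, (p.2.2, p.2.1, p.1)))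

lemma PsiT_PhiT (G : SimpleGraph V) (j : ℕ) (v y z : V) (hj : j < 3)
    (hadj : G.Adj v y) (hnadj : ¬ G.Adj v z) :
    PsiT G (PhiT G (j, (v, y, z))) = (j, (v, y, z)) := by
  have h1 : G.Adj y v := hadj.symm
  have h2 : ¬ G.Adj z v := fun h => hnadj h.symm
  interval_cases j
  · simp [PhiT, PsiT, hadj, hnadj]
  · simp [PhiT, PsiT, hadj, hnadj]
  · by_cases hyz : G.Adj y z
    · have h3 : G.Adj z y := hyz.symm
      simp [PhiT, PsiT, hadj, hnadj, hyz, h1, h2, h3]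
    · have h4 : ¬ G.Adj z y := fun h => hyz h.symm
      simp [PhiT, PsiT, hadj, hnadj, hyz, h1, h2, h4]

lemma PT_le_depT (G : SimpleGraph V) (W : Finset V) :
    3 * (PT G W).card ≤ (depT G W).card := by
  have hcard : ((Finset.range 3) ×ˢ PT G W).card = 3 * (PT G W).card := by
    rw [Finset.card_product, Finset.card_range]
  rw [← hcard]
  apply Finset.card_le_card_of_injOn (PhiT G)
  · rintro ⟨j, v, y, z⟩ hq
    simp only [Finset.mem_coe, Finset.mem_product, Finset.mem_range] at hq
    obtain ⟨hj, hPT⟩ := hq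
    simp only [PT, Finset.mem_filter, Finset.mem_product] at hPT
    obtain ⟨⟨hv, hy, hz⟩, hadj, hnadj, hzv⟩ := hPT
    have hyv : y ≠ v := fun h => G.loopless.irrefl v (h ▸ hadj)
    have hyz : y ≠ z := fun h => hnadj (h ▸ hadj)
    interval_cases j
    · exact mem_depT G W hv hy hz (Ne.symm hyv) (fun h => hzv h.symm) hyz (Or.inl hadj)
    · exact mem_depT G W hv hz hy (fun h => hzv h.symm) (Ne.symm hyv) (Ne.symm hyz)
        (Or.inr (Or.inl hadj))
    · by_cases hyzadj : G.Adj y z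
      · simp only [PhiT, if_neg (by omega : ¬(2:ℕ) = 0), if_neg (by omega : ¬(2:ℕ) = 1),
          if_pos hyzadj]
        exact mem_depT G W hy hz hv hyz hyv hzv (Or.inl hyzadj)
      · simp only [PhiT, if_neg (by omega : ¬(2:ℕ) = 0), if_neg (by omega : ¬(2:ℕ) = 1),
          if_neg hyzadj]
        exact mem_depT G W hz hy hv (Ne.symm hyz) hzv hyv
          (Or.inr (Or.inr hadj.symm))
  · rintro ⟨j1, v1, y1, z1⟩ hq1 ⟨j2, v2, y2, z2⟩ hq2 heq
    simp only [Finset.coe_product, Set.mem_prod, Finset.mem_coe, Finset.mem_range] at hq1 hq2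
    obtain ⟨hj1, hPT1⟩ := hq1
    obtain ⟨hj2, hPT2⟩ := hq2
    simp only [PT, Finset.mem_filter, Finset.mem_product] at hPT1 hPT2
    have e1 := PsiT_PhiT G j1 v1 y1 z1 hj1 hPT1.2.1 hPT1.2.2.1
    have e2 := PsiT_PhiT G j2 v2 y2 z2 hj2 hPT2.2.1 hPT2.2.2.1
    rw [heq] at e1
    rw [e2] at e1
    exact e1.symm

lemma master (G : SimpleGraph V) (W : Finset V) :
    6 * (famW G W 3).card + 3 * ∑ v ∈ W, (nbrW G W v).card * (nnbrW G W v).card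
      ≤ W.card * ((W.card - 1) * (W.card - 2)) := by
  have h1 := PT_le_depT G W
  rw [PT_card] at h1
  have h2 := depT_add_indT G W
  rw [indT_card, allT_card] at h2
  omega

end Master3
section BaseCase

set_option linter.unusedSectionVars false
set_option maxHeartbeats 1000000
attribute [local instance] Classical.propDecidable

variable {V : Type*} [Fintype V] [DecidableEq V]

lemma six_choose_three (m : ℕ) : 6 * m.choose 3 = m * ((m - 1) * (m - 2)) := by
  have h := Nat.descFactorial_eq_factorial_mul_choose m 3
  have h3 : Nat.factorial 3 = 6 := rfl
  rw [h3] at h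
  rw [← h]
  show m.descFactorial 3 = _
  rw [Nat.descFactorial_succ, Nat.descFactorial_succ, Nat.descFactorial_succ,
    Nat.descFactorial_zero]
  simp only [Nat.sub_zero, mul_one]
  ring

lemma mem_indep_triple_nnbr {G : SimpleGraph V} {s : Finset V} (hs : s ∈ fam G 3) {v : V}
    (hv : v ∈ s) : 2 ≤ (nnbrW G univ v).card := by
  have hcard := fam_mem_card hs
  have hind := fam_mem_indep hs
  have hsub : s.erase v ⊆ nnbrW G univ v := by
    intro w hw
    obtain ⟨hwv, hws⟩ := Finset.mem_erase.mp hw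
    simp only [nnbrW, Finset.mem_filter, Finset.mem_univ, true_and]
    exact ⟨hwv, fun h => hind v hv w hws h⟩
  have := Finset.card_le_card hsub
  rw [Finset.card_erase_of_mem hv, hcard] at this
  omega

/-- The target structure: two dominating vertices, the rest independent. -/
def StructP (G : SimpleGraph V) (u v : V) : Prop :=
  u ≠ v ∧ (∀ w, w ≠ u → w ≠ v → G.Adj u w ∧ G.Adj v w) ∧
    (∀ w x, w ≠ u → w ≠ v → x ≠ u → x ≠ v → ¬ G.Adj w x)

lemma base_case (G : SimpleGraph V) (hn : 5 ≤ Fintype.card V)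
    (hδ : ∀ v, 2 ≤ (nbrW G univ v).card) :
    (fam G 3).card ≤ (Fintype.card V - 2).choose 3 ∧
      ((fam G 3).card = (Fintype.card V - 2).choose 3 → ∃ u v, StructP G u v) := by
  by_cases hA : ∃ u v : V, u ≠ v ∧ (nnbrW G univ u).card ≤ 1 ∧ (nnbrW G univ v).card ≤ 1
  · obtain ⟨u, v, hne, h1, h2⟩ := hA
    have hsub : fam G 3 ⊆ (univ \ {u, v}).powersetCard 3 := by
      intro s hs
      rw [Finset.mem_powersetCard]
      refine ⟨?_, fam_mem_card hs⟩
      intro w hw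
      simp only [Finset.mem_sdiff, Finset.mem_univ, true_and, Finset.mem_insert,
        Finset.mem_singleton]
      push_neg
      constructor
      · rintro rfl
        have := mem_indep_triple_nnbr hs hw
        omega
      · rintro rfl
        have := mem_indep_triple_nnbr hs hw
        omega
    have huv2 : ({u, v} : Finset V).card = 2 := by
      rw [Finset.card_insert_of_notMem (by simp [hne]), Finset.card_singleton]
    have hDcard : (univ \ {u, v}).card = Fintype.card V - 2 := by
      rw [Finset.card_sdiff_of_subset (Finset.subset_univ _), Finset.card_univ, huv2]
    have hineq : (fam G 3).card ≤ (Fintype.card V - 2).choose 3 := by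
      calc (fam G 3).card ≤ ((univ \ {u, v}).powersetCard 3).card := Finset.card_le_card hsub
        _ = (Fintype.card V - 2).choose 3 := by rw [Finset.card_powersetCard, hDcard]
    refine ⟨hineq, fun heq => ⟨u, v, hne, ?_, ?_⟩⟩
    all_goals {
      have hfameq : fam G 3 = (univ \ {u, v}).powersetCard 3 :=
        Finset.eq_of_subset_of_card_le hsub
          (by rw [Finset.card_powersetCard, hDcard, heq])
      have hpw : ∀ w x, w ≠ u → w ≠ v → x ≠ u → x ≠ v → ¬ G.Adj w x := by
        intro w x hwu hwv hxu hxv hadj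
        have hwx : w ≠ x := G.ne_of_adj hadj
        have hbig : 0 < (univ \ {u, v, w, x}).card := by
          have hc4 : ({u, v, w, x} : Finset V).card ≤ 4 := by
            calc ({u, v, w, x} : Finset V).card
                ≤ ({v, w, x} : Finset V).card + 1 := Finset.card_insert_le _ _
              _ ≤ (({w, x} : Finset V).card + 1) + 1 := by
                  have := Finset.card_insert_le v ({w, x} : Finset V); omega
              _ ≤ ((({x} : Finset V).card + 1) + 1) + 1 := by
                  have := Finset.card_insert_le w ({x} : Finset V); omega
              _ = 4 := by rw [Finset.card_singleton]
          have := Finset.card_sdiff_of_subset (Finset.subset_univ ({u, v, w, x} : Finset V))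
          rw [Finset.card_univ] at this
          omega
        obtain ⟨z, hz⟩ := Finset.card_pos.mp hbig
        simp only [Finset.mem_sdiff, Finset.mem_univ, true_and, Finset.mem_insert,
          Finset.mem_singleton] at hz
        push_neg at hz
        obtain ⟨hzu, hzv, hzw, hzx⟩ := hz
        have hmem : ({w, x, z} : Finset V) ∈ (univ \ {u, v}).powersetCard 3 := by
          rw [Finset.mem_powersetCard]
          constructor
          · intro a ha
            simp only [Finset.mem_insert, Finset.mem_singleton] at ha
            simp only [Finset.mem_sdiff, Finset.mem_univ, true_and, Finset.mem_insert,
              Finset.mem_singleton]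
            push_neg
            rcases ha with rfl | rfl | rfl
            · exact ⟨hwu, hwv⟩
            · exact ⟨hxu, hxv⟩
            · exact ⟨hzu, hzv⟩
          · rw [Finset.card_insert_of_notMem (by simp [hwx, Ne.symm hzw]),
              Finset.card_insert_of_notMem (by simp [Ne.symm hzx]), Finset.card_singleton]
        rw [← hfameq] at hmem
        exact fam_mem_indep hmem w (by simp) x (by simp) hadj
      first
      | { -- hubs goal
          intro w hwu hwv
          have hsubnbr : nbrW G univ w ⊆ {u, v} := by
            intro x hx
            have hadj : G.Adj w x := (Finset.mem_filter.mp hx).2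
            by_contra hxm
            simp only [Finset.mem_insert, Finset.mem_singleton] at hxm
            push_neg at hxm
            exact hpw w x hwu hwv hxm.1 hxm.2 hadj
          have h2w := hδ w
          have heqn : nbrW G univ w = {u, v} :=
            Finset.eq_of_subset_of_card_le hsubnbr (by omega)
          constructor
          · have : u ∈ nbrW G univ w := by rw [heqn]; simp
            exact ((Finset.mem_filter.mp this).2).symm
          · have : v ∈ nbrW G univ w := by rw [heqn]; simp
            exact ((Finset.mem_filter.mp this).2).symm }
      | exact hpw
    }
  · -- at most one vertex with few non-neighbours : strict inequality
    push_neg at hA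
    have hstrict : (fam G 3).card < (Fintype.card V - 2).choose 3 := by
      obtain ⟨c, hn'⟩ : ∃ c, Fintype.card V = c + 5 := ⟨Fintype.card V - 5, by omega⟩
      have hsix : 6 * ((Fintype.card V - 2).choose 3) = (c + 3) * ((c + 2) * (c + 1)) := by
        have h := six_choose_three (Fintype.card V - 2)
        have e2 : Fintype.card V - 2 = c + 3 := by omega
        have e3 : c + 3 - 1 = c + 2 := by omega
        have e4 : c + 3 - 2 = c + 1 := by omega
        rw [e2, e3, e4] at h
        rw [e2, h]
      by_cases hex : ∃ u, (nnbrW G univ u).card ≤ 1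
      · obtain ⟨u, hu⟩ := hex
        have hothers : ∀ w, w ≠ u → 2 ≤ (nnbrW G univ w).card := by
          intro w hw
          have := hA u w (Ne.symm hw) hu
          omega
        by_cases h0 : (nnbrW G univ u).card = 0
        · -- u is adjacent to everything; work inside W = univ.erase u
          have hadj_u : ∀ w, w ≠ u → G.Adj u w := by
            intro w hw
            by_contra hnadj
            have hmem : w ∈ nnbrW G univ u := by
              simp only [nnbrW, Finset.mem_filter, Finset.mem_univ, true_and]
              exact ⟨hw, hnadj⟩
            rw [Finset.card_eq_zero.mp h0] at hmem
            exact absurd hmem (Finset.notMem_empty w)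
          have hWcard : (univ.erase u).card = c + 4 := by
            rw [Finset.card_erase_of_mem (Finset.mem_univ u), Finset.card_univ, hn']
            omega
          have hfam_eq : fam G 3 = famW G (univ.erase u) 3 := by
            ext s
            simp only [fam, famW, Finset.mem_filter, Finset.mem_univ, true_and,
              Finset.mem_powersetCard]
            constructor
            · rintro ⟨hcard, hind⟩
              refine ⟨⟨?_, hcard⟩, hind⟩
              intro w hw
              rw [Finset.mem_erase]
              refine ⟨?_, Finset.mem_univ w⟩
              rintro rfl
              have : s ∈ fam G 3 := by
                simp only [fam, Finset.mem_filter, Finset.mem_univ, true_and]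
                exact ⟨hcard, hind⟩
              have := mem_indep_triple_nnbr this hw
              omega
            · rintro ⟨⟨-, hcard⟩, hind⟩
              exact ⟨hcard, hind⟩
          have hsum : ∀ v ∈ univ.erase u,
              c + 2 ≤ (nbrW G (univ.erase u) v).card * (nnbrW G (univ.erase u) v).card := by
            intro v hv
            have hvne : v ≠ u := (Finset.mem_erase.mp hv).1
            have hd : 1 ≤ (nbrW G (univ.erase u) v).card := by
              have hmem : u ∈ nbrW G univ v := by
                simp only [nbrW, Finset.mem_filter, Finset.mem_univ, true_and]
                exact (hadj_u v hvne).symm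
              have heq : nbrW G (univ.erase u) v = (nbrW G univ v).erase u := by
                ext w
                simp only [nbrW, Finset.mem_filter, Finset.mem_erase, Finset.mem_univ,
                  true_and]
                tauto
              rw [heq, Finset.card_erase_of_mem hmem]
              have := hδ v
              omega
            have hnd : 2 ≤ (nnbrW G (univ.erase u) v).card := by
              have heq : nnbrW G (univ.erase u) v = nnbrW G univ v := by
                ext w
                simp only [nnbrW, Finset.mem_filter, Finset.mem_erase, Finset.mem_univ,
                  true_and]
                constructor
                · tauto
                · rintro ⟨hwv, hnadj⟩
                  refine ⟨⟨?_, trivial⟩, hwv, hnadj⟩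
                  rintro rfl
                  exact hnadj (hadj_u v hvne).symm
              rw [heq]
              exact hothers v hvne
            have hpart := card_partition G (univ.erase u) hv
            rw [hWcard] at hpart
            obtain ⟨a, ha⟩ : ∃ a, (nbrW G (univ.erase u) v).card = a + 1 := ⟨(nbrW G (univ.erase u) v).card - 1, by omega⟩
            obtain ⟨b, hb⟩ : ∃ b, (nnbrW G (univ.erase u) v).card = b + 1 := ⟨(nnbrW G (univ.erase u) v).card - 1, by omega⟩
            rw [ha, hb]
            rw [ha, hb] at hpart
            have hab : a + b = c + 1 := by omega
            nlinarith
          have hsumall : (c + 4) * (c + 2) ≤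
              ∑ v ∈ univ.erase u, (nbrW G (univ.erase u) v).card * (nnbrW G (univ.erase u) v).card := by
            calc (c + 4) * (c + 2)
                = ∑ _v ∈ univ.erase u, (c + 2) := by
                  rw [Finset.sum_const, hWcard, smul_eq_mul]
              _ ≤ _ := Finset.sum_le_sum hsum
          have hm := master G (univ.erase u)
          rw [hWcard, ← hfam_eq] at hm
          have e5 : c + 4 - 1 = c + 3 := by omega
          have e6 : c + 4 - 2 = c + 2 := by omega
          rw [e5, e6] at hm
          have h6 : 6 * (fam G 3).card < 6 * ((Fintype.card V - 2).choose 3) := by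
            rw [hsix]
            nlinarith
          omega
        · -- the exceptional vertex has exactly one non-neighbour
          have h1 : (nnbrW G univ u).card = 1 := by omega
          have hm := master G univ
          rw [Finset.card_univ, hn', ← fam_eq_famW_univ] at hm
          have e5 : c + 5 - 1 = c + 4 := by omega
          have e6 : c + 5 - 2 = c + 3 := by omega
          rw [e5, e6] at hm
          have hu_term : (nbrW G univ u).card * (nnbrW G univ u).card = c + 3 := by
            have hpart := card_partition G univ (Finset.mem_univ u)
            rw [Finset.card_univ, hn'] at hpart
            rw [h1, mul_one]
            omega
          have hsum : ∀ v ∈ univ.erase u,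
              2 * (c + 2) ≤ (nbrW G univ v).card * (nnbrW G univ v).card := by
            intro v hv
            have hvne : v ≠ u := (Finset.mem_erase.mp hv).1
            have hpart := card_partition G univ (Finset.mem_univ v)
            rw [Finset.card_univ, hn'] at hpart
            have h2d := hδ v
            have h2n := hothers v hvne
            obtain ⟨a, ha⟩ : ∃ a, (nbrW G univ v).card = a + 2 := ⟨(nbrW G univ v).card - 2, by omega⟩
            obtain ⟨b, hb⟩ : ∃ b, (nnbrW G univ v).card = b + 2 := ⟨(nnbrW G univ v).card - 2, by omega⟩
            rw [ha, hb]
            rw [ha, hb] at hpart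
            have hab : a + b = c := by omega
            nlinarith
          have hsplit := Finset.sum_erase_add univ
            (fun v => (nbrW G univ v).card * (nnbrW G univ v).card) (Finset.mem_univ u)
          have hErase : (univ.erase u).card = c + 4 := by
            rw [Finset.card_erase_of_mem (Finset.mem_univ u), Finset.card_univ, hn']
            omega
          have hsumall : (c + 4) * (2 * (c + 2)) + (c + 3) ≤
              ∑ v ∈ univ, (nbrW G univ v).card * (nnbrW G univ v).card := by
            beta_reduce at hsplit
            rw [← hsplit, hu_term]
            have : (c + 4) * (2 * (c + 2))
                ≤ ∑ v ∈ univ.erase u, (nbrW G univ v).card * (nnbrW G univ v).card := by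
              calc (c + 4) * (2 * (c + 2))
                  = ∑ _v ∈ univ.erase u, 2 * (c + 2) := by
                    rw [Finset.sum_const, hErase, smul_eq_mul]
                _ ≤ _ := Finset.sum_le_sum hsum
            omega
          have h6 : 6 * (fam G 3).card < 6 * ((Fintype.card V - 2).choose 3) := by
            rw [hsix]
            nlinarith
          omega
      · -- every vertex has at least two non-neighbours
        push_neg at hex
        have hm := master G univ
        rw [Finset.card_univ, hn', ← fam_eq_famW_univ] at hm
        have e5 : c + 5 - 1 = c + 4 := by omega
        have e6 : c + 5 - 2 = c + 3 := by omega
        rw [e5, e6] at hm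
        have hsum : ∀ v ∈ (univ : Finset V),
            2 * (c + 2) ≤ (nbrW G univ v).card * (nnbrW G univ v).card := by
          intro v hv
          have hpart := card_partition G univ (Finset.mem_univ v)
          rw [Finset.card_univ, hn'] at hpart
          have h2d := hδ v
          have h2n := hex v
          obtain ⟨a, ha⟩ : ∃ a, (nbrW G univ v).card = a + 2 := ⟨(nbrW G univ v).card - 2, by omega⟩
          obtain ⟨b, hb⟩ : ∃ b, (nnbrW G univ v).card = b + 2 := ⟨(nnbrW G univ v).card - 2, by omega⟩
          rw [ha, hb]
          rw [ha, hb] at hpart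
          have hab : a + b = c := by omega
          nlinarith
        have hsumall : (c + 5) * (2 * (c + 2)) ≤
            ∑ v ∈ univ, (nbrW G univ v).card * (nnbrW G univ v).card := by
          calc (c + 5) * (2 * (c + 2))
              = ∑ _v ∈ (univ : Finset V), 2 * (c + 2) := by
                rw [Finset.sum_const, Finset.card_univ, hn', smul_eq_mul]
            _ ≤ _ := Finset.sum_le_sum hsum
        have h6 : 6 * (fam G 3).card < 6 * ((Fintype.card V - 2).choose 3) := by
          rw [hsix]
          nlinarith
        omega
    exact ⟨le_of_lt hstrict, fun heq => absurd heq (Nat.ne_of_lt hstrict)⟩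

end BaseCase
section IsoConstruction

set_option linter.unusedSectionVars false
attribute [local instance] Classical.propDecidable

variable {V : Type*} [Fintype V] [DecidableEq V]

lemma structP_adj_uv {G : SimpleGraph V} {u v : V} (hS : StructP G u v)
    (hchrom : G.chromaticNumber = 3) : G.Adj u v := by
  obtain ⟨hne, hhub, hind⟩ := hS
  by_contra hnadj
  have hcol : G.Colorable 2 := by
    have C : G.Coloring (Fin 2) := by
      refine SimpleGraph.Coloring.mk (fun w => if w = u ∨ w = v then 0 else 1) ?_
      intro a b hab hc
      beta_reduce at hc
      by_cases ha : a = u ∨ a = v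
      · by_cases hb : b = u ∨ b = v
        · rcases ha with rfl | rfl <;> rcases hb with rfl | rfl
          · exact G.loopless.irrefl _ hab
          · exact hnadj hab
          · exact hnadj hab.symm
          · exact G.loopless.irrefl _ hab
        · rw [if_pos ha, if_neg hb] at hc
          exact absurd hc (by decide)
      · by_cases hb : b = u ∨ b = v
        · rw [if_neg ha, if_pos hb] at hc
          exact absurd hc (by decide)
        · push_neg at ha hb
          exact hind a b ha.1 ha.2 hb.1 hb.2 hab
    simpa using C.colorable
  have hle := hcol.chromaticNumber_le
  rw [hchrom] at hle
  have : (3 : ℕ) ≤ 2 := by exact_mod_cast hle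
  omega

lemma structP_iso {G : SimpleGraph V} {u v : V} {n : ℕ} (hcard : Fintype.card V = n)
    (hn : 5 ≤ n) (hS : StructP G u v) (huv : G.Adj u v) : Nonempty (G ≃g K2JoinE n) := by
  obtain ⟨hne, hhub, hind⟩ := hS
  haveI : NeZero n := ⟨by omega⟩
  have hv0 : ((0 : Fin n) : ℕ) = 0 := rfl
  have hv1 : ((1 : Fin n) : ℕ) = 1 := by
    rw [Fin.val_one' n, Nat.mod_eq_of_lt (by omega)]
  have h01 : (0 : Fin n) ≠ 1 := by
    intro h
    have := congrArg Fin.val h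
    rw [hv0, hv1] at this
    omega
  let e0 : V ≃ Fin n := Fintype.equivFinOfCardEq hcard
  let e1 : V ≃ Fin n := e0.trans (Equiv.swap (e0 u) 0)
  have he1u : e1 u = 0 := by
    simp only [e1, Equiv.trans_apply, Equiv.swap_apply_left]
  let e : V ≃ Fin n := e1.trans (Equiv.swap (e1 v) 1)
  have he1v0 : e1 v ≠ 0 := by
    rw [← he1u]
    exact fun h => hne (e1.injective h).symm
  have heu : e u = 0 := by
    simp only [e, Equiv.trans_apply, he1u]
    exact Equiv.swap_apply_of_ne_of_ne (Ne.symm he1v0) h01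
  have hev : e v = 1 := by
    simp only [e, Equiv.trans_apply, Equiv.swap_apply_left]
  have hout : ∀ w, w ≠ u → w ≠ v → 2 ≤ ((e w : Fin n) : ℕ) := by
    intro w hwu hwv
    have h1 : e w ≠ 0 := by
      rw [← heu]; exact fun h => hwu (e.injective h)
    have h2 : e w ≠ 1 := by
      rw [← hev]; exact fun h => hwv (e.injective h)
    have h1' : ((e w : Fin n) : ℕ) ≠ 0 := fun hval => h1 (Fin.ext (by rw [hv0]; exact hval))
    have h2' : ((e w : Fin n) : ℕ) ≠ 1 := fun hval => h2 (Fin.ext (by rw [hv1]; exact hval))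
    omega
  have hlow : ∀ w, ((e w : Fin n) : ℕ) < 2 ↔ (w = u ∨ w = v) := by
    intro w
    constructor
    · intro hlt
      by_contra hcon
      push_neg at hcon
      have := hout w hcon.1 hcon.2
      omega
    · rintro (rfl | rfl)
      · rw [heu, hv0]; omega
      · rw [hev, hv1]; omega
  refine ⟨⟨e, ?_⟩⟩
  intro a b
  show (K2JoinE n).Adj (e a) (e b) ↔ G.Adj a b
  constructor
  · rintro ⟨hne', hlt⟩
    have hab : a ≠ b := fun h => hne' (by rw [h])
    rcases hlt with hlt | hlt
    · rcases (hlow a).mp hlt with rfl | rfl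
      · by_cases hbv : b = v
        · subst hbv; exact huv
        · exact (hhub b (Ne.symm hab) hbv).1
      · by_cases hbu : b = u
        · subst hbu; exact huv.symm
        · exact (hhub b hbu (Ne.symm hab)).2
    · rcases (hlow b).mp hlt with rfl | rfl
      · by_cases hav : a = v
        · subst hav; exact huv.symm
        · exact ((hhub a hab hav).1).symm
      · by_cases hau : a = u
        · subst hau; exact huv
        · exact ((hhub a hau hab).2).symm
  · intro hadj
    have hab : a ≠ b := G.ne_of_adj hadj
    refine ⟨fun h => hab (e.injective h), ?_⟩
    rw [hlow a, hlow b]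
    by_contra hcon
    push_neg at hcon
    obtain ⟨⟨hau, hav⟩, hbu, hbv⟩ := hcon
    exact hind a b hau hav hbu hbv hadj

end IsoConstruction

section Final

set_option linter.unusedSectionVars false
attribute [local instance] Classical.propDecidable

variable {V : Type*} [Fintype V] [DecidableEq V]

lemma ineq_all (G : SimpleGraph V) (hn : 5 ≤ Fintype.card V)
    (hδ : ∀ v, 2 ≤ (nbrW G univ v).card) :
    ∀ t, 3 ≤ t → t ≤ Fintype.card V - 2 →
      (fam G t).card ≤ (Fintype.card V - 2).choose t := by
  intro t
  induction t with
  | zero => omega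
  | succ k IH =>
    intro h3 hle
    rcases Nat.lt_or_ge k 3 with hk | hk
    · -- k + 1 = 3
      have hk2 : k = 2 := by omega
      subst hk2
      exact (base_case G hn hδ).1
    · have hIH := IH hk (by omega)
      have hstep := step_lemma G hδ (t := k + 1) (by omega)
      have hch := Nat.choose_succ_right_eq (Fintype.card V - 2) k
      have he : Fintype.card V - (k + 1) - 1 = Fintype.card V - 2 - k := by omega
      rw [he] at hstep
      simp only [Nat.add_sub_cancel] at hstep
      have hcomm : (Fintype.card V - 2 - k) * ((Fintype.card V - 2).choose k)
          = (k + 1) * ((Fintype.card V - 2).choose (k + 1)) := by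
        rw [mul_comm, ← hch]
        exact mul_comm _ _
      have hchain : (k + 1) * (fam G (k + 1)).card
          ≤ (k + 1) * ((Fintype.card V - 2).choose (k + 1)) :=
        (hstep.trans (Nat.mul_le_mul_left _ hIH)).trans_eq hcomm
      exact Nat.le_of_mul_le_mul_left hchain (by omega)

lemma eq_descent (G : SimpleGraph V) (hn : 5 ≤ Fintype.card V)
    (hδ : ∀ v, 2 ≤ (nbrW G univ v).card) :
    ∀ t, 3 ≤ t → t ≤ Fintype.card V - 2 →
      (fam G t).card = (Fintype.card V - 2).choose t →
      (fam G 3).card = (Fintype.card V - 2).choose 3 := by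
  intro t
  induction t with
  | zero => omega
  | succ k IH =>
    intro h3 hle heq
    rcases Nat.lt_or_ge k 3 with hk | hk
    · have hk2 : k = 2 := by omega
      subst hk2
      exact heq
    · apply IH hk (by omega)
      have hineq := ineq_all G hn hδ k hk (by omega)
      have hstep := step_lemma G hδ (t := k + 1) (by omega)
      have hch := Nat.choose_succ_right_eq (Fintype.card V - 2) k
      have he : Fintype.card V - (k + 1) - 1 = Fintype.card V - 2 - k := by omega
      rw [he] at hstep
      simp only [Nat.add_sub_cancel] at hstep
      have hcomm : (Fintype.card V - 2 - k) * ((Fintype.card V - 2).choose k)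
          = (k + 1) * ((Fintype.card V - 2).choose (k + 1)) := by
        rw [mul_comm, ← hch]
        exact mul_comm _ _
      have hrev : (Fintype.card V - 2 - k) * ((Fintype.card V - 2).choose k)
          ≤ (Fintype.card V - 2 - k) * (fam G k).card := by
        rw [hcomm, ← heq]
        exact hstep
      have hge := Nat.le_of_mul_le_mul_left hrev (by omega)
      omega

end Final

/-- **Theorem 3, third bullet.** For `n ≥ 4`, every `n`-vertex `3`-chromatic `2`-connected graph
`G` satisfies `i_t(G) ≤ i_t(K_2 ∨ E_{n-2})` for all `3 ≤ t ≤ n-2`; moreover for `n ≥ 5`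
equality holds iff `G ≅ K_2 ∨ E_{n-2}`. -/
theorem max_indep_size_t_2conn_3chrom {V : Type*} [Fintype V] (n : ℕ) (hn : 4 ≤ n)
    (G : SimpleGraph V) (hcard : Fintype.card V = n)
    (hchrom : G.chromaticNumber = 3) (hconn : LConnected G 2) :
    ∀ t : ℕ, 3 ≤ t → t ≤ n - 2 →
      numIndepSize G t ≤ numIndepSize (K2JoinE n) t ∧
        (5 ≤ n → (numIndepSize G t = numIndepSize (K2JoinE n) t ↔
          Nonempty (G ≃g K2JoinE n))) := by
  classical
  subst hcard
  intro t h3 hle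
  have hn5 : 5 ≤ Fintype.card V := by omega
  have hδ : ∀ v, 2 ≤ (nbrW G univ v).card := by
    intro v
    have h := minDeg_of_LConnected (by omega) hconn v
    have : nbr G v = nbrW G univ v := by
      ext w; simp [nbr, nbrW]
    rwa [this] at h
  have hK : numIndepSize (K2JoinE (Fintype.card V)) t
      = (Fintype.card V - 2).choose t := K2JoinE_count _ _ (by omega) (by omega)
  have hG : numIndepSize G t = (fam G t).card := numIndepSize_eq_fam G t
  constructor
  · rw [hK, hG]
    exact ineq_all G hn5 hδ t h3 hle
  · intro _
    constructor
    · intro heq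
      rw [hK, hG] at heq
      have h3eq := eq_descent G hn5 hδ t h3 hle heq
      obtain ⟨u, v, hS⟩ := (base_case G hn5 hδ).2 h3eq
      exact structP_iso rfl hn5 hS (structP_adj_uv hS hchrom)
    · rintro ⟨e⟩
      exact numIndepSize_iso e t
end

section
/- If G is an n-vertex k-chromatic ℓ-connected simple graph with k − 1 > ℓ > 1 and ℓ ≤ n − k, then the number of edges of G satisfies |E(G)| ≥ C(k,2) + (n−k+1)·ℓ/2, i.e., 2·|E(G)| ≥ k(k−1) + (n−k+1)·ℓ. -/
open SimpleGraph

private lemma arith_aux1 (ℓ b d t m : ℕ) (h : ℓ ≤ t) :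
    (ℓ+2+b)*(ℓ+1+b) + (d+m+1)*ℓ ≤ m*ℓ + ((ℓ+1+b)*(ℓ+2+b+d) + t) := by nlinarith

private lemma arith_aux2 (ℓ b d t : ℕ) (h : ℓ ≤ d) :
    (ℓ+2+b)*(ℓ+1+b) + (d+0+1)*ℓ ≤ 0*ℓ + ((ℓ+1+b)*(ℓ+2+b+d) + t) := by nlinarith

private lemma exists_adj_of_reachable {V' : Type*} {H : SimpleGraph V'} {a b : V'}
    (h : H.Reachable a b) (hne : a ≠ b) : ∃ c, H.Adj a c := by
  obtain ⟨w⟩ := h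
  cases w with
  | nil => exact absurd rfl hne
  | cons h p => exact ⟨_, h⟩

private lemma walk_closed {V : Type*} (G : SimpleGraph V) (s : Set V) (P : V → Prop)
    (hstep : ∀ x y : V, P x → x ∈ s → y ∈ s → G.Adj x y → P y) :
    ∀ {a b : s} (_ : (G.induce s).Walk a b), P a.1 → P b.1 := by
  intro a b w
  induction w with
  | nil => exact id
  | @cons u v _ h p ih =>
    intro hpa
    exact ih (hstep u.1 v.1 hpa u.2 v.2 (by simpa using h))

private lemma min_degree_of_LConnected {V : Type*} [Fintype V] [DecidableEq V]
    (G : SimpleGraph V) [DecidableRel G.Adj] (ℓ : ℕ) (hconn : LConnected G ℓ)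
    (hV : ℓ + 2 ≤ Fintype.card V) (v : V) : ℓ ≤ G.degree v := by
  by_contra h
  push_neg at h
  have hs : (G.neighborFinset v).card < ℓ := by rwa [G.card_neighborFinset_eq_degree]
  have hc := hconn.2 _ hs
  have hv : v ∈ ((↑(G.neighborFinset v) : Set V))ᶜ := by simp
  have h2 : 1 < (Finset.univ \ G.neighborFinset v).card := by
    rw [Finset.card_sdiff_of_subset (Finset.subset_univ _), Finset.card_univ]
    omega
  obtain ⟨u, hu, hune⟩ := Finset.exists_mem_ne h2 v
  have hu' : u ∈ ((↑(G.neighborFinset v) : Set V))ᶜ := by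
    simp only [Finset.mem_sdiff] at hu
    simpa using hu.2
  obtain ⟨c, hadj⟩ := exists_adj_of_reachable (hc.preconnected ⟨v, hv⟩ ⟨u, hu'⟩)
    (fun he => hune (congrArg Subtype.val he).symm)
  have hadj' : G.Adj v c.1 := by simpa using hadj
  have : c.1 ∈ G.neighborFinset v := (SimpleGraph.mem_neighborFinset _ _ _).mpr hadj'
  exact c.2 (by simpa using this)

/-- **Theorem 5 (lower bound).** If `G` is an `n`-vertex `k`-chromatic `ℓ`-connected graph with
`k - 1 > ℓ > 1` and `ℓ ≤ n - k`, then `|E(G)| ≥ C(k,2) + (n-k+1)ℓ/2`, i.e.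
`2|E(G)| ≥ k(k-1) + (n-k+1)ℓ`. -/
theorem min_edges_le_case {V : Type*} [Fintype V] (n k ℓ : ℕ)
    (hℓk : ℓ + 1 < k) (hℓ : 1 < ℓ) (hn : k + ℓ ≤ n)
    (G : SimpleGraph V) (hcard : Fintype.card V = n)
    (hchrom : G.chromaticNumber = k) (hconn : LConnected G ℓ) :
    k * (k - 1) + (n - k + 1) * ℓ ≤ 2 * Nat.card G.edgeSet := by
  classical
  have hk4 : 4 ≤ k := by omega
  have hVcard : ℓ + 2 ≤ Fintype.card V := by omega
  -- G is not (k-1)-colorable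
  have hnotcol : ¬ G.Colorable (k - 1) := by
    intro h
    have h1 := h.chromaticNumber_le
    rw [hchrom] at h1
    have h2 : k ≤ k - 1 := Nat.cast_le.mp h1
    omega
  -- minimal non-(k-1)-colorable vertex subset W
  set 𝒮 : Finset (Finset V) :=
    Finset.univ.filter (fun W : Finset V => ¬ (G.induce (↑W : Set V)).Colorable (k - 1)) with h𝒮
  have huniv : (Finset.univ : Finset V) ∈ 𝒮 := by
    rw [h𝒮, Finset.mem_filter]
    refine ⟨Finset.mem_univ _, fun hcol => ?_⟩
    obtain ⟨C⟩ := hcol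
    exact hnotcol ⟨⟨fun x => C ⟨x, by simp⟩, fun {a b} hab => C.valid (by simpa using hab)⟩⟩
  obtain ⟨W, hWmem, hWmin⟩ := 𝒮.exists_min_image Finset.card ⟨_, huniv⟩
  have hWnc : ¬ (G.induce (↑W : Set V)).Colorable (k - 1) := by
    rw [h𝒮, Finset.mem_filter] at hWmem
    exact hWmem.2
  have hWmin' : ∀ W' : Finset V, W'.card < W.card →
      (G.induce (↑W' : Set V)).Colorable (k - 1) := by
    intro W' hlt
    by_contra hnc
    have := hWmin W' (by rw [h𝒮, Finset.mem_filter]; exact ⟨Finset.mem_univ _, hnc⟩)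
    omega
  -- |W| ≥ k
  have hWk : k ≤ W.card := by
    by_contra hlt
    push_neg at hlt
    have h1 := (G.induce (↑W : Set V)).colorable_of_fintype
    have h2 : Fintype.card ↑(↑W : Set V) = W.card := by simp
    rw [h2] at h1
    exact hWnc (h1.mono (by omega))
  -- every vertex of W has at least k-1 neighbors inside W
  have hdegW : ∀ v ∈ W, k - 1 ≤ (G.neighborFinset v ∩ W).card := by
    intro v hv
    by_contra hlt
    push_neg at hlt
    obtain ⟨C⟩ := hWmin' (W.erase v) (by rw [Finset.card_erase_of_mem hv]; omega)
    have hmem : ∀ x ∈ G.neighborFinset v ∩ W, x ∈ W.erase v := by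
      intro x hx
      rw [Finset.mem_inter, SimpleGraph.mem_neighborFinset] at hx
      exact Finset.mem_erase.mpr ⟨fun he => G.irrefl (he ▸ hx.1), hx.2⟩
    set img : Finset (Fin (k - 1)) :=
      (G.neighborFinset v ∩ W).attach.image
        (fun x => C ⟨x.1, by exact_mod_cast hmem x.1 x.2⟩) with himgdef
    have himg : img.card < k - 1 := by
      have := Finset.card_image_le (s := (G.neighborFinset v ∩ W).attach)
        (f := fun x => C ⟨x.1, by exact_mod_cast hmem x.1 x.2⟩)
      rw [Finset.card_attach] at this
      calc img.card ≤ (G.neighborFinset v ∩ W).card := this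
        _ < k - 1 := hlt
    obtain ⟨c, hc⟩ : ∃ c : Fin (k - 1), c ∉ img := by
      by_contra hall
      push_neg at hall
      have h1 : (Finset.univ : Finset (Fin (k - 1))) ⊆ img := fun c _ => hall c
      have h2 := Finset.card_le_card h1
      rw [Finset.card_univ, Fintype.card_fin] at h2
      omega
    refine hWnc ⟨⟨fun x => if hx : x.1 = v then c
        else C ⟨x.1, by exact_mod_cast Finset.mem_erase.mpr ⟨hx, by exact_mod_cast x.2⟩⟩, ?_⟩⟩
    intro a b hab
    have hab' : G.Adj a.1 b.1 := by simpa using hab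
    by_cases ha : a.1 = v <;> by_cases hb : b.1 = v
    · exact absurd (ha ▸ hb ▸ hab') (G.irrefl)
    · simp only [ha, hb, dif_pos, dif_neg, not_false_iff]
      intro he
      apply hc
      rw [he]
      have hbm : b.1 ∈ G.neighborFinset v ∩ W := by
        rw [Finset.mem_inter, SimpleGraph.mem_neighborFinset]
        exact ⟨ha ▸ hab', by exact_mod_cast b.2⟩
      rw [himgdef]
      exact Finset.mem_image_of_mem _ (Finset.mem_attach _ ⟨b.1, hbm⟩)
    · simp only [ha, hb, dif_pos, dif_neg, not_false_iff]
      intro he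
      apply hc
      rw [← he]
      have ham : a.1 ∈ G.neighborFinset v ∩ W := by
        rw [Finset.mem_inter, SimpleGraph.mem_neighborFinset]
        exact ⟨hb ▸ hab'.symm, by exact_mod_cast a.2⟩
      rw [himgdef]
      exact Finset.mem_image_of_mem _ (Finset.mem_attach _ ⟨a.1, ham⟩)
    · simp only [ha, hb, dif_neg, not_false_iff]
      exact C.valid (by simpa using hab')
  -- min degree ≥ ℓ
  have hmind : ∀ v : V, ℓ ≤ G.degree v := fun v =>
    min_degree_of_LConnected G ℓ hconn hVcard v
  -- boundary vertices of W
  set T : Finset V := W.filter (fun w => ∃ u, u ∉ W ∧ G.Adj w u) with hTdef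
  have hTW : T ⊆ W := Finset.filter_subset _ _
  -- if W ≠ V then |T| ≥ ℓ
  have hcross : W.card < n → ℓ ≤ T.card := by
    intro hWn
    by_contra hTc
    push_neg at hTc
    have hc := hconn.2 T hTc
    have hWT : ((W \ T).Nonempty) := by
      rw [← Finset.card_pos, Finset.card_sdiff_of_subset hTW]
      omega
    obtain ⟨w0, hw0⟩ := hWT
    obtain ⟨hw0W, hw0T⟩ := Finset.mem_sdiff.mp hw0
    have hUW : ((Finset.univ \ W).Nonempty) := by
      rw [← Finset.card_pos, Finset.card_sdiff_of_subset (Finset.subset_univ _), Finset.card_univ, hcard]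
      omega
    obtain ⟨u0, hu0⟩ := hUW
    have hu0W : u0 ∉ W := (Finset.mem_sdiff.mp hu0).2
    have hw0m : w0 ∈ ((↑T : Set V))ᶜ := by simpa using hw0T
    have hu0m : u0 ∈ ((↑T : Set V))ᶜ := by
      simp only [Set.mem_compl_iff, Finset.mem_coe]
      exact fun h => hu0W (hTW h)
    obtain ⟨wk⟩ := hc.preconnected ⟨w0, hw0m⟩ ⟨u0, hu0m⟩
    have hstep : ∀ x y : V, x ∈ W → x ∈ ((↑T : Set V))ᶜ → y ∈ ((↑T : Set V))ᶜ →
        G.Adj x y → y ∈ W := by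
      intro x y hxW hxs _ hadj
      by_contra hyW
      apply hxs
      simp only [Set.mem_compl_iff, Finset.mem_coe, not_not]
      rw [hTdef, Finset.mem_filter]
      exact ⟨hxW, y, hyW, hadj⟩
    have := walk_closed G ((↑T : Set V))ᶜ (· ∈ W) hstep wk hw0W
    exact hu0W this
  -- degrees inside W
  have hdeg2 : ∀ v ∈ W, (k - 1) + (if v ∈ T then 1 else 0) ≤ G.degree v := by
    intro v hv
    have h1 := hdegW v hv
    have hsplit : G.degree v
        = (G.neighborFinset v ∩ W).card + (G.neighborFinset v \ W).card := by
      rw [← G.card_neighborFinset_eq_degree, ← Finset.card_inter_add_card_sdiff]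
    by_cases hvT : v ∈ T
    · rw [hTdef, Finset.mem_filter] at hvT
      obtain ⟨_, u, huW, hadj⟩ := hvT
      have h2 : 0 < (G.neighborFinset v \ W).card := by
        rw [Finset.card_pos]
        exact ⟨u, Finset.mem_sdiff.mpr ⟨(SimpleGraph.mem_neighborFinset _ _ _).mpr hadj, huW⟩⟩
      have hvT' : v ∈ T := by rw [hTdef, Finset.mem_filter]; exact ⟨hv, u, huW, hadj⟩
      rw [if_pos hvT']
      omega
    · rw [if_neg hvT]
      omega
  -- sum of degrees
  have hsum : ∑ v : V, G.degree v = 2 * Nat.card G.edgeSet := by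
    rw [G.sum_degrees_eq_twice_card_edges, SimpleGraph.edgeFinset_card, Nat.card_eq_fintype_card]
  have hsplit : ∑ v ∈ Finset.univ \ W, G.degree v + ∑ v ∈ W, G.degree v = ∑ v : V, G.degree v :=
    Finset.sum_sdiff (Finset.subset_univ W)
  have hS1 : (n - W.card) * ℓ ≤ ∑ v ∈ Finset.univ \ W, G.degree v := by
    calc (n - W.card) * ℓ = (Finset.univ \ W).card * ℓ := by
          rw [Finset.card_sdiff_of_subset (Finset.subset_univ _), Finset.card_univ, hcard]
      _ = ∑ _v ∈ Finset.univ \ W, ℓ := by rw [Finset.sum_const, smul_eq_mul]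
      _ ≤ _ := Finset.sum_le_sum (fun v _ => hmind v)
  have hS2 : (k - 1) * W.card + T.card ≤ ∑ v ∈ W, G.degree v := by
    have e1 : ∑ v ∈ W, ((k - 1) + if v ∈ T then 1 else 0)
        = (k - 1) * W.card + T.card := by
      rw [Finset.sum_add_distrib, Finset.sum_const, smul_eq_mul, mul_comm]
      congr 1
      rw [Finset.sum_ite_mem, Finset.inter_eq_right.mpr hTW, Finset.sum_const, smul_eq_mul,
        mul_one]
    rw [← e1]
    exact Finset.sum_le_sum hdeg2
  have hWn : W.card ≤ n := by
    rw [← hcard, ← Finset.card_univ]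
    exact Finset.card_le_card (Finset.subset_univ _)
  have htot : (n - W.card) * ℓ + ((k - 1) * W.card + T.card) ≤ 2 * Nat.card G.edgeSet := by
    rw [← hsum, ← hsplit]
    exact Nat.add_le_add hS1 hS2
  refine le_trans ?_ htot
  obtain ⟨d, hd⟩ : ∃ d, W.card = k + d := ⟨W.card - k, by omega⟩
  obtain ⟨m, hm⟩ : ∃ m, n = W.card + m := ⟨n - W.card, by omega⟩
  obtain ⟨b, hb⟩ : ∃ b, k = ℓ + 2 + b := ⟨k - ℓ - 2, by omega⟩
  have e1 : n - k + 1 = d + m + 1 := by omega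
  have e2 : k - 1 = ℓ + 1 + b := by omega
  have e3 : n - W.card = m := by omega
  rw [e1, e2, e3, hd]
  subst hb
  rcases Nat.eq_zero_or_pos m with h0 | h0
  · have hld : ℓ ≤ d := by omega
    subst h0
    exact arith_aux2 ℓ b d T.card hld
  · have hlt : ℓ ≤ T.card := hcross (by omega)
    exact arith_aux1 ℓ b d T.card m hlt
end

section
/- For all integers n, k, ℓ with k − 1 > ℓ > 1, ℓ > n − k, and n > k, there exists an n-vertex k-chromatic ℓ-connected simple graph with exactly C(k,2) + C(n−k,2) + (n−k)·(ℓ − (n−k−1)) edges. -/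
/-!
Write `m = n - k` and `ℓ = m + d`. The extremal graph is a clique on the core `0, …, k - 1`
together with a clique on the extra vertices `k + j` (`j < m`), where `k + j` is also joined to
the `d + 1` core vertices `j, …, j + d`. The core is a `k`-clique, and colouring `k + j` with
`j + d + 1` is proper, so the graph is `k`-chromatic. Counting every edge at its larger endpoint
gives `C(k,2) + C(m,2) + m (d + 1)` edges.

Delete fewer than `ℓ` vertices. Since `ℓ < k`, some core vertex survives. If no surviving extra
vertex kept a core neighbour, then for the set `J` of surviving extras the whole core
neighbourhood `J + {0, …, d}` would be deleted; by Cauchy–Davenport in `ℕ` it has at least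
`#J + d` elements, and together with the `m - #J` deleted extras that makes `ℓ` deleted vertices.
So the surviving core and the surviving extras are two cliques joined by an edge.
-/

open SimpleGraph Finset
open scoped Pointwise

namespace SimpleGraph

variable {V : Type*} {G : SimpleGraph V}

theorem IsClique.reachable {s : Set V} (hs : G.IsClique s) {u v : V} (hu : u ∈ s) (hv : v ∈ s) :
    G.Reachable u v := by
  rcases eq_or_ne u v with rfl | huv
  · rfl
  · exact (hs hu hv huv).reachable

theorem connected_of_isClique_of_isClique {A B : Set V} (hA : G.IsClique A) (hB : G.IsClique B)
    (hAB : ∀ v, v ∈ A ∨ v ∈ B) {a : V} (ha : a ∈ A)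
    (hcross : ∀ b ∈ B, ∃ x ∈ B, ∃ y ∈ A, G.Adj x y) : G.Connected := by
  have reach_a : ∀ v, G.Reachable v a := by
    intro v
    rcases hAB v with hv | hv
    · exact hA.reachable hv ha
    · obtain ⟨x, hx, y, hy, hxy⟩ := hcross v hv
      exact (hB.reachable hv hx).trans (hxy.reachable.trans (hA.reachable hy ha))
  have : Nonempty V := ⟨a⟩
  exact ⟨fun u v => (reach_a u).trans (reach_a v).symm⟩

theorem card_edgeFinset_eq_sum_card_filter_lt [Fintype V] [LinearOrder V] [DecidableRel G.Adj] :
    #G.edgeFinset = ∑ v, #{u | u < v ∧ G.Adj u v} := by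
  rw [← card_sigma]
  refine (card_bij (fun p _ => s(p.2, p.1)) ?_ ?_ ?_).symm
  · rintro ⟨v, u⟩ h
    simp only [mem_sigma, mem_filter, mem_univ, true_and] at h
    simpa using h.2
  · rintro ⟨v, u⟩ h ⟨v', u'⟩ h' he
    simp only [mem_sigma, mem_filter, mem_univ, true_and] at h h'
    rcases Sym2.eq_iff.1 he with ⟨rfl, rfl⟩ | ⟨rfl, rfl⟩
    · rfl
    · exact absurd (h.1.trans h'.1) (lt_irrefl _)
  · intro e he
    induction e using Sym2.ind with
    | h u v =>
      have huv : G.Adj u v := by simpa using he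
      rcases huv.ne.lt_or_gt with h | h
      · exact ⟨⟨v, u⟩, by simp [h, huv], rfl⟩
      · exact ⟨⟨u, v⟩, by simp [h, huv.symm], Sym2.eq_swap⟩

end SimpleGraph

theorem Fin.card_filter_lt_val {n : ℕ} (v : Fin n) (P : ℕ → Prop) [DecidablePred P] :
    #{u : Fin n | u < v ∧ P u} = #{i ∈ range v | P i} := by
  rw [← card_map Fin.valEmbedding]
  congr 1
  ext i
  simp only [mem_map, mem_filter, mem_univ, true_and, Fin.valEmbedding_apply, mem_range]
  constructor
  · rintro ⟨u, ⟨huv, hu⟩, rfl⟩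
    exact ⟨huv, hu⟩
  · rintro ⟨hi, hP⟩
    exact ⟨⟨i, hi.trans v.isLt⟩, ⟨hi, hP⟩, rfl⟩

theorem Fin.card_filter_val_lt_add {k m : ℕ} : #{v : Fin (k + m) | (v : ℕ) < k} = k := by
  simp [Fin.card_filter_val_lt]

def SharpRel (k d i i' : ℕ) : Prop :=
  (i < k ∧ i' < k) ∨ (k ≤ i ∧ k ≤ i') ∨ (i' < k ∧ k ≤ i ∧ i - k ≤ i' ∧ i' ≤ i - k + d)

instance (k d i i' : ℕ) : Decidable (SharpRel k d i i') := by
  unfold SharpRel; infer_instance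

def sharpGraph (k m d : ℕ) : SimpleGraph (Fin (k + m)) :=
  fromRel fun u v => SharpRel k d u v

instance (k m d : ℕ) : DecidableRel (sharpGraph k m d).Adj := fun u v =>
  inferInstanceAs (Decidable (u ≠ v ∧ (SharpRel k d u v ∨ SharpRel k d v u)))

section SharpGraph

variable {k m d : ℕ}

theorem isClique_sharpGraph_core : (sharpGraph k m d).IsClique {v | (v : ℕ) < k} :=
  fun _ hu _ hv huv => ⟨huv, .inl (.inl ⟨hu, hv⟩)⟩

theorem isClique_sharpGraph_extra : (sharpGraph k m d).IsClique {v | k ≤ (v : ℕ)} :=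
  fun _ hu _ hv huv => ⟨huv, .inl (.inr (.inl ⟨hu, hv⟩))⟩

theorem colorable_sharpGraph (hk : m + d < k) : (sharpGraph k m d).Colorable k :=
  ⟨.mk (fun v => if h : (v : ℕ) < k then ⟨v, h⟩ else ⟨v - k + d + 1, by omega⟩) fun {u v} huv => by
    simp only [sharpGraph, fromRel_adj, ne_eq, Fin.ext_iff] at huv
    unfold SharpRel at huv
    split_ifs <;> simp only [ne_eq, Fin.mk.injEq] <;> omega⟩

theorem chromaticNumber_sharpGraph (hk : m + d < k) : (sharpGraph k m d).chromaticNumber = k := by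
  refine le_antisymm (colorable_sharpGraph hk).chromaticNumber_le ?_
  have hcore : (sharpGraph k m d).IsClique ({v | (v : ℕ) < k} : Finset (Fin (k + m))) := by
    simpa using isClique_sharpGraph_core
  simpa [Fin.card_filter_val_lt_add] using hcore.card_le_chromaticNumber

theorem card_filter_lt_adj_sharpGraph (hk : m + d ≤ k) (v : Fin (k + m)) :
    #{u | u < v ∧ (sharpGraph k m d).Adj u v} =
      if (v : ℕ) < k then (v : ℕ) else v - k + (d + 1) := by
  have hadj : #{u | u < v ∧ (sharpGraph k m d).Adj u v} =
      #{u | u < v ∧ (SharpRel k d u v ∨ SharpRel k d v u)} :=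
    congrArg card <| filter_congr fun u _ => and_congr_right fun (h : u < v) => and_iff_right h.ne
  rw [hadj, Fin.card_filter_lt_val v fun i => SharpRel k d i v ∨ SharpRel k d v i]
  split_ifs with hv
  · convert card_range (v : ℕ) using 2
    ext i
    simp only [mem_filter, mem_range]
    unfold SharpRel
    omega
  · have hsplit : {i ∈ range v | SharpRel k d i v ∨ SharpRel k d v i} =
        Ico k (v : ℕ) ∪ Icc (v - k) (v - k + d) := by
      ext i
      simp only [mem_filter, mem_range, mem_union, mem_Ico, mem_Icc]
      unfold SharpRel
      omega
    have hdisj : Disjoint (Ico k (v : ℕ)) (Icc (v - k) (v - k + d)) :=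
      disjoint_left.2 fun i hi hi' => by simp only [mem_Ico, mem_Icc] at hi hi'; omega
    rw [hsplit, card_union_of_disjoint hdisj, Nat.card_Ico, Nat.card_Icc]
    omega

theorem card_edgeSet_sharpGraph (hk : m + d ≤ k) :
    Nat.card (sharpGraph k m d).edgeSet = k.choose 2 + m.choose 2 + m * (d + 1) := by
  rw [Nat.card_eq_fintype_card, ← edgeFinset_card, card_edgeFinset_eq_sum_card_filter_lt]
  simp_rw [card_filter_lt_adj_sharpGraph hk]
  rw [Fin.sum_univ_eq_sum_range (fun i => if i < k then i else i - k + (d + 1)), sum_range_add,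
    sum_congr rfl fun i hi => if_pos (mem_range.1 hi), sum_congr rfl fun j _ => if_neg (by omega)]
  simp [sum_add_distrib, sum_range_id, Nat.choose_two_right, add_assoc]

theorem exists_adj_sharpGraph_of_card_lt (hk : m + d ≤ k) {s : Finset (Fin (k + m))}
    (hs : #s < m + d) {a : Fin (k + m)} (ha : k ≤ (a : ℕ)) (has : a ∉ s) :
    ∃ x ∉ s, ∃ c ∉ s, k ≤ (x : ℕ) ∧ (c : ℕ) < k ∧ (sharpGraph k m d).Adj x c := by
  by_contra! h
  set S := s.map Fin.valEmbedding
  have hS : ∀ {v : Fin (k + m)}, (v : ℕ) ∈ S ↔ v ∈ s := mem_map' Fin.valEmbedding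
  set J := {j ∈ range m | k + j ∉ S}
  have hJ : J.Nonempty := by
    refine ⟨a - k, mem_filter.2 ⟨mem_range.2 (by omega), fun haS => has (hS.1 ?_)⟩⟩
    rwa [Nat.add_sub_cancel' ha] at haS
  have hcore : J + range (d + 1) ⊆ S := by
    intro c hc
    obtain ⟨j, hj, t, ht, rfl⟩ := mem_add.1 hc
    rw [mem_filter, mem_range] at hj
    rw [mem_range] at ht
    by_contra hcS
    refine h ⟨k + j, by omega⟩ (mt hS.2 hj.2) ⟨j + t, by omega⟩ (mt hS.2 hcS)
      (by simp) (by simp; omega) ?_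
    refine ⟨by simp [Fin.ext_iff]; omega, .inl ?_⟩
    simp only [SharpRel]
    omega
  have hextra : (range m \ J).map (addLeftEmbedding k) ⊆ S := by
    intro i hi
    simp only [mem_map, mem_sdiff, mem_range, mem_filter, addLeftEmbedding_apply, J] at hi
    obtain ⟨j, ⟨hj, hjJ⟩, rfl⟩ := hi
    by_contra hjS
    exact hjJ ⟨hj, hjS⟩
  have hdisj : Disjoint (J + range (d + 1)) ((range m \ J).map (addLeftEmbedding k)) := by
    refine disjoint_left.2 fun i hi hi' => ?_
    obtain ⟨j, hj, t, ht, rfl⟩ := mem_add.1 hi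
    simp only [mem_filter, mem_range, J] at hj ht
    simp only [mem_map, addLeftEmbedding_apply] at hi'
    omega
  have hJm : #J ≤ m := (card_filter_le _ _).trans (card_range m).le
  have hsdiff : #(range m \ J) = m - #J := by
    rw [card_sdiff_of_subset (filter_subset _ _), card_range]
  have hsum : #J + d ≤ #(J + range (d + 1)) := by
    simpa using cauchy_davenport_add_of_linearOrder_isCancelAdd hJ nonempty_range_add_one
  refine hs.not_ge ?_
  calc m + d ≤ #(J + range (d + 1)) + #(range m \ J) := by omega
    _ = #(J + range (d + 1) ∪ (range m \ J).map (addLeftEmbedding k)) := by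
      rw [card_union_of_disjoint hdisj, card_map]
    _ ≤ #S := card_le_card (union_subset hcore hextra)
    _ = #s := card_map _

theorem lConnected_sharpGraph (hk : m + d < k) : LConnected (sharpGraph k m d) (m + d) := by
  refine ⟨by rw [Fintype.card_fin]; omega, fun s hs => ?_⟩
  obtain ⟨p, hp, hps⟩ : ∃ p : Fin (k + m), (p : ℕ) < k ∧ p ∉ s := by
    by_contra! h
    have hcore : #{v : Fin (k + m) | (v : ℕ) < k} ≤ #s :=
      card_le_card fun v hv => h v (mem_filter.1 hv).2
    rw [Fin.card_filter_val_lt_add] at hcore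
    omega
  refine connected_of_isClique_of_isClique (A := {v | (v.1 : ℕ) < k}) (B := {v | k ≤ (v.1 : ℕ)})
    (isClique_induce_iff.2 (isClique_sharpGraph_core.subset ?_))
    (isClique_induce_iff.2 (isClique_sharpGraph_extra.subset ?_))
    (fun v => lt_or_ge (v.1 : ℕ) k) (a := ⟨p, by simpa⟩) hp ?_
  · rintro _ ⟨v, hv, rfl⟩
    exact hv
  · rintro _ ⟨v, hv, rfl⟩
    exact hv
  · rintro ⟨b, hb⟩ hbk
    obtain ⟨x, hx, c, hc, hxk, hck, hxc⟩ :=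
      exists_adj_sharpGraph_of_card_lt hk.le hs hbk (by simpa using hb)
    exact ⟨⟨x, by simpa⟩, hxk, ⟨c, by simpa⟩, hck, hxc⟩

end SharpGraph

theorem min_edges_gt_case_sharp_general (n k ℓ : ℕ)
    (hℓk : ℓ + 1 < k) (hn : n < k + ℓ) (hnk : k < n) :
    ∃ G : SimpleGraph (Fin n),
      G.chromaticNumber = k ∧ LConnected G ℓ ∧
        Nat.card G.edgeSet =
          Nat.choose k 2 + Nat.choose (n - k) 2 + (n - k) * (ℓ - (n - k - 1)) := by
  obtain ⟨m, rfl⟩ := Nat.exists_eq_add_of_le hnk.le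
  obtain ⟨d, rfl⟩ := Nat.exists_eq_add_of_le (show m ≤ ℓ by omega)
  refine ⟨sharpGraph k m d, chromaticNumber_sharpGraph (by omega),
    lConnected_sharpGraph (by omega), ?_⟩
  rw [card_edgeSet_sharpGraph (by omega), Nat.add_sub_cancel_left,
    show m + d - (m - 1) = d + 1 by omega]

/-- **Theorem 6 (sharpness).** For `k - 1 > ℓ > 1`, `ℓ > n - k` and `n > k` there is an
`n`-vertex `k`-chromatic `ℓ`-connected graph with exactly
`C(k,2) + C(n-k,2) + (n-k)(ℓ - (n-k-1))` edges. -/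
theorem min_edges_gt_case_sharp (n k ℓ : ℕ)
    (hℓk : ℓ + 1 < k) (hℓ : 1 < ℓ) (hn : n < k + ℓ) (hnk : k < n) :
    ∃ G : SimpleGraph (Fin n),
      G.chromaticNumber = k ∧ LConnected G ℓ ∧
        Nat.card G.edgeSet =
          Nat.choose k 2 + Nat.choose (n - k) 2 + (n - k) * (ℓ - (n - k - 1)) :=
  min_edges_gt_case_sharp_general n k ℓ hℓk hn hnk
end

section
/- Let G be an n-vertex simple graph with minimum degree at least ℓ ≥ 1, and suppose a maximum matching of G has size m with n > 2m. Then there exist disjoint vertex sets L and S with |L| = ℓ and |S| ≥ (n − 2m)/C(2m, ℓ) such that every vertex of S is adjacent to every vertex of L; in particular, G contains a complete bipartite graph K_{ℓ, ⌈(n−2m)/C(2m,ℓ)⌉} as a (not necessarily induced) subgraph. -/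
/-!
The `2m` vertices of a maximum matching cover every edge, since an edge between two unmatched
vertices would extend the matching. So each of the at least `n - 2m` unmatched vertices has all of
its (at least `ℓ`) neighbours among the `2m` matched ones. Assigning to every unmatched vertex an
`ℓ`-set of its neighbours, the pigeonhole principle finds an `ℓ`-set `L` chosen by at least
`(n - 2m) / C(2m, ℓ)` of them; these form `S`.
-/

open SimpleGraph

/-- `G` contains a matching of size `m`: a family of `m` edges whose `2m` endpoints are
pairwise distinct. -/
def HasMatchingOfSize {V : Type*} (G : SimpleGraph V) (m : ℕ) : Prop :=
  ∃ e : Fin m → V × V, (∀ i, G.Adj (e i).1 (e i).2) ∧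
    Function.Injective (fun p : Fin m × Bool => if p.2 then (e p.1).1 else (e p.1).2)

open Finset

section

variable {V : Type*} {G : SimpleGraph V} {m : ℕ}

def matchingEndpoint (e : Fin m → V × V) (p : Fin m × Bool) : V :=
  if p.2 then (e p.1).1 else (e p.1).2

theorem hasMatchingOfSize_succ_of_adj {e : Fin m → V × V} (he : ∀ i, G.Adj (e i).1 (e i).2)
    (hinj : (matchingEndpoint e).Injective) {u v : V} (huv : G.Adj u v)
    (hu : u ∉ Set.range (matchingEndpoint e)) (hv : v ∉ Set.range (matchingEndpoint e)) :
    HasMatchingOfSize G (m + 1) := by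
  refine ⟨Fin.snoc e (u, v), Fin.lastCases (by simpa) (by simpa), ?_⟩
  have hcast (i : Fin m) (b : Bool) :
      matchingEndpoint (Fin.snoc e (u, v)) (i.castSucc, b) = matchingEndpoint e (i, b) := by
    simp [matchingEndpoint]
  have hlast (b : Bool) :
      matchingEndpoint (Fin.snoc e (u, v)) (Fin.last m, b) = if b then u else v := by
    simp [matchingEndpoint]
  have hnew (b : Bool) (p : Fin m × Bool) : matchingEndpoint e p ≠ if b then u else v := by
    cases b
    exacts [fun h => hv ⟨p, h⟩, fun h => hu ⟨p, h⟩]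
  rintro ⟨i, b⟩ ⟨j, c⟩ h
  change matchingEndpoint _ _ = matchingEndpoint _ _ at h
  induction i using Fin.lastCases <;> induction j using Fin.lastCases
  · rw [hlast, hlast] at h
    cases b <;> cases c <;> simp_all [G.ne_of_adj huv, (G.ne_of_adj huv).symm]
  · rw [hlast, hcast] at h
    exact absurd h.symm (hnew _ _)
  · rw [hcast, hlast] at h
    exact absurd h (hnew _ _)
  · rw [hcast, hcast] at h
    simpa using hinj h

theorem HasMatchingOfSize.exists_vertexCover_card_eq_two_mul [DecidableEq V]
    (hM : HasMatchingOfSize G m) (hmax : ¬ HasMatchingOfSize G (m + 1)) :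
    ∃ M : Finset V, #M = 2 * m ∧ ∀ ⦃u v⦄, G.Adj u v → u ∈ M ∨ v ∈ M := by
  obtain ⟨e, he, hinj : (matchingEndpoint e).Injective⟩ := hM
  refine ⟨univ.image (matchingEndpoint e), ?_, fun u v huv => ?_⟩
  · rw [card_image_of_injective _ hinj, card_univ, Fintype.card_prod, Fintype.card_fin,
      Fintype.card_bool, mul_comm]
  · by_contra! h
    simp only [mem_image, mem_univ, true_and] at h
    exact hmax (hasMatchingOfSize_succ_of_adj he hinj huv h.1 h.2)

theorem SimpleGraph.exists_isCompleteBetween_of_le_card_filter_adj [DecidableEq V]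
    [DecidableRel G.Adj] {U M : Finset V} {ℓ : ℕ} (hU : U.Nonempty)
    (hdeg : ∀ v ∈ U, ℓ ≤ #{u ∈ M | G.Adj u v}) :
    ∃ L S : Finset V, #L = ℓ ∧ #U ≤ #S * (#M).choose ℓ ∧ G.IsCompleteBetween L S := by
  choose! N hNsub hNcard using fun v hv => exists_subset_card_eq (hdeg v hv)
  have hmaps : ∀ v ∈ U, N v ∈ M.powersetCard ℓ := fun v hv =>
    mem_powersetCard.2 ⟨(hNsub v hv).trans (filter_subset _ _), hNcard v hv⟩
  obtain ⟨L, hL, hLmax⟩ :=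
    exists_max_image (M.powersetCard ℓ) (fun L => #{v ∈ U | N v = L})
      ((hU.image N).mono (image_subset_iff.2 hmaps))
  refine ⟨L, {v ∈ U | N v = L}, (mem_powersetCard.1 hL).2, ?_, ?_⟩
  · simpa [card_powersetCard] using card_le_mul_card_image_of_maps_to hmaps _ hLmax
  · intro u hu v hv
    obtain ⟨hvU, rfl⟩ := mem_filter.1 hv
    exact (mem_filter.1 (hNsub v hvU hu)).2

end

theorem complete_bipartite_of_max_matching_general {V : Type*} [Fintype V] (n m ℓ : ℕ)
    (G : SimpleGraph V) (hcard : Fintype.card V = n)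
    (hdeg : ∀ v : V, ℓ ≤ Nat.card (G.neighborSet v))
    (hM : HasMatchingOfSize G m) (hMmax : ¬ HasMatchingOfSize G (m + 1))
    (hn : 2 * m < n) :
    ∃ L S : Finset V, Disjoint L S ∧ L.card = ℓ ∧
      n - 2 * m ≤ S.card * Nat.choose (2 * m) ℓ ∧
      ∀ u ∈ L, ∀ v ∈ S, G.Adj u v := by
  classical
  obtain ⟨M, hMcard, hcover⟩ := hM.exists_vertexCover_card_eq_two_mul hMmax
  have hunmatched : #Mᶜ = n - 2 * m := by rw [card_compl, hcard, hMcard]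
  have hdegM : ∀ v ∈ Mᶜ, ℓ ≤ #{u ∈ M | G.Adj u v} := by
    intro v hv
    calc ℓ ≤ #(G.neighborFinset v) := by
          rw [card_neighborFinset_eq_degree, ← card_neighborSet_eq_degree,
            ← Nat.card_eq_fintype_card]
          exact hdeg v
      _ ≤ #{u ∈ M | G.Adj u v} := card_le_card fun u hu => by
          have hvu := (mem_neighborFinset G v u).1 hu
          exact mem_filter.2 ⟨(hcover hvu).resolve_left (mem_compl.1 hv), hvu.symm⟩
  obtain ⟨L, S, hL, hS, hLS⟩ :=
    G.exists_isCompleteBetween_of_le_card_filter_adj (card_pos.1 (by omega)) hdegM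
  refine ⟨L, S, disjoint_coe.1 hLS.disjoint, hL, ?_, fun u hu v hv => hLS hu hv⟩
  rwa [hunmatched, hMcard] at hS

/-- If `G` is an `n`-vertex graph with minimum degree at least `ℓ ≥ 1` whose maximum matching
has size `m` with `n > 2m`, then there are disjoint vertex sets `L` and `S` with `|L| = ℓ` and
`|S| ≥ (n - 2m)/C(2m, ℓ)` such that every vertex of `S` is adjacent to every vertex of `L`
(i.e. `G` contains a complete bipartite subgraph `K_{ℓ,⌈(n-2m)/C(2m,ℓ)⌉}`). -/
theorem complete_bipartite_of_max_matching {V : Type*} [Fintype V] (n m ℓ : ℕ)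
    (hℓ : 1 ≤ ℓ) (G : SimpleGraph V) (hcard : Fintype.card V = n)
    (hdeg : ∀ v : V, ℓ ≤ Nat.card (G.neighborSet v))
    (hM : HasMatchingOfSize G m) (hMmax : ¬ HasMatchingOfSize G (m + 1))
    (hn : 2 * m < n) :
    ∃ L S : Finset V, Disjoint L S ∧ L.card = ℓ ∧
      n - 2 * m ≤ S.card * Nat.choose (2 * m) ℓ ∧
      ∀ u ∈ L, ∀ v ∈ S, G.Adj u v :=
  complete_bipartite_of_max_matching_general n m ℓ G hcard hdeg hM hMmax hn
end

section
/- Let n ≥ 4 with n ≠ 5. If G is an n-vertex 3-chromatic 2-connected simple graph, then i(G) ≤ 2^(n−2) + 2 = i(K_2 ∨ E_{n−2}); that is, K_2 ∨ E_{n−2} maximizes the number of independent sets among n-vertex 3-chromatic 2-connected graphs. -/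
open SimpleGraph

/-- The number of independent sets in `G` (including the empty set). -/
noncomputable def numIndep {V : Type*} [Fintype V] (G : SimpleGraph V) : ℕ :=
  Nat.card {s : Finset V // ∀ a ∈ s, ∀ b ∈ s, ¬ G.Adj a b}

/-!
A 2-connected graph has minimum degree at least 2, and a 3-chromatic graph is not bipartite.
Fix a maximum independent set `A` of size `α` and let `B = Aᶜ` have size `β`. An independent
set is `Y ∪ Z` with `Y ⊆ B` independent and `Z` a subset of the vertices of `A` without
neighbours in `Y`; by maximality of `A` there are at most `α - |Y|` such vertices. Summing over
`Y` gives `i(G) ≤ 2^α (3/2)^β`, which is at most `2^(n-2)` as soon as `β ≥ 5`.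

For `β ≤ 4` the sum over `Y ⊆ B` is written out term by term. Since `G` is not bipartite, `B`
contains an edge `xy`, which kills every `Y ⊇ {x, y}`. Every vertex of `A` has its (at least two)
neighbours in `B`, so the numbers of vertices of `A` avoiding a single `b ∈ B` add up to at most
`α (β - 2)`, and convexity of `t ↦ 2^t` bounds the singleton terms. Only `α = 2`, `β = 3`
escapes this count, and indeed the 5-cycle has `11 > 2^3 + 2` independent sets.
-/

open Finset

lemma two_pow_add_two_pow_le {x y s : ℕ} (h : x + y ≤ s) : 2 ^ x + 2 ^ y ≤ 2 ^ s + 1 := by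
  have hx := Nat.one_le_two_pow (n := x)
  have hy := Nat.one_le_two_pow (n := y)
  calc 2 ^ x + 2 ^ y ≤ 2 ^ x * 2 ^ y + 1 := by nlinarith
    _ = 2 ^ (x + y) + 1 := by rw [pow_add]
    _ ≤ 2 ^ s + 1 := by gcongr; norm_num

lemma two_pow_add_two_pow_le_of_add_le {x y m : ℕ} (hx : x ≤ m) (hy : y ≤ m)
    (h : x + y ≤ m + 1) : 2 ^ x + 2 ^ y ≤ 2 ^ m + 2 := by
  rcases x with _ | x
  · have : 2 ^ y ≤ 2 ^ m := Nat.pow_le_pow_right two_pos hy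
    simp only [pow_zero]; omega
  rcases y with _ | y
  · have : 2 ^ (x + 1) ≤ 2 ^ m := Nat.pow_le_pow_right two_pos hx
    simp only [pow_zero]; omega
  have h1 : 2 ^ x + 2 ^ y ≤ 2 ^ (m - 1) + 1 := two_pow_add_two_pow_le (by omega)
  have h2 : 2 ^ m = 2 * 2 ^ (m - 1) := by rw [← pow_succ']; congr 1; omega
  rw [pow_succ, pow_succ]; omega

lemma sum_three_two_pow_le {a b c m : ℕ} (ha : a ≤ m) (hb : b ≤ m) (hc : c ≤ m)
    (h : a + b + c ≤ m + 1) : 2 ^ a + 2 ^ b + 2 ^ c ≤ 2 ^ m + 3 := by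
  by_cases hab : a + b ≤ m
  · have := two_pow_add_two_pow_le (le_refl (a + b))
    have := two_pow_add_two_pow_le_of_add_le hab hc h
    omega
  · obtain rfl : c = 0 := by omega
    have := two_pow_add_two_pow_le_of_add_le ha hb (by omega)
    simp only [pow_zero]; omega

lemma sum_four_two_pow_le {a b c d m : ℕ} (ha : a ≤ m) (hb : b ≤ m) (hc : c ≤ m)
    (hd : d ≤ m) (h : a + b + c + d ≤ 2 * m + 2) :
    2 ^ a + 2 ^ b + 2 ^ c + 2 ^ d ≤ 3 * 2 ^ m + 2 := by
  have := Nat.pow_le_pow_right two_pos ha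
  have := Nat.pow_le_pow_right two_pos hb
  have := Nat.pow_le_pow_right two_pos hc
  have := Nat.pow_le_pow_right two_pos hd
  by_cases hab : a + b ≤ m + 1
  · have := two_pow_add_two_pow_le_of_add_le ha hb hab
    omega
  · have := two_pow_add_two_pow_le_of_add_le hc hd (by omega)
    omega

lemma three_pow_mul_four_le_four_pow {b : ℕ} (hb : 5 ≤ b) : 3 ^ b * 4 ≤ 4 ^ b := by
  induction b, hb using Nat.le_induction with
  | base => norm_num
  | succ k _ ih => rw [pow_succ, pow_succ]; omega

lemma Finset.sum_powerset_singleton {α M : Type*} [DecidableEq α] [AddCommMonoid M]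
    (f : Finset α → M) (a : α) : ∑ t ∈ ({a} : Finset α).powerset, f t = f ∅ + f {a} := by
  rw [← insert_empty, sum_powerset_insert (notMem_empty a), powerset_empty, sum_singleton,
    sum_singleton]

namespace SimpleGraph

lemma isIndepSet_coe_iff {V : Type*} {G : SimpleGraph V} {s : Finset V} :
    G.IsIndepSet (s : Set V) ↔ ∀ a ∈ s, ∀ b ∈ s, ¬G.Adj a b :=
  ⟨fun h _ ha _ hb hab => h ha hb (G.ne_of_adj hab) hab, fun h _ ha _ hb _ => h _ ha _ hb⟩

section Avoiders

variable {V : Type*} {G : SimpleGraph V} [DecidableRel G.Adj] {A Y : Finset V}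

def avoiders (G : SimpleGraph V) [DecidableRel G.Adj] (A Y : Finset V) : Finset V :=
  {a ∈ A | ∀ y ∈ Y, ¬G.Adj a y}

lemma mem_avoiders {a : V} : a ∈ G.avoiders A Y ↔ a ∈ A ∧ ∀ y ∈ Y, ¬G.Adj a y := by
  simp [avoiders]

lemma avoiders_subset (A Y : Finset V) : G.avoiders A Y ⊆ A := filter_subset _ _

lemma isIndepSet_union_of_subset_avoiders [DecidableEq V] {Z : Finset V}
    (hA : G.IsIndepSet (A : Set V)) (hY : G.IsIndepSet (Y : Set V)) (hZ : Z ⊆ G.avoiders A Y) :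
    G.IsIndepSet ((Y ∪ Z : Finset V) : Set V) := by
  rw [isIndepSet_coe_iff] at *
  have hZA : ∀ z ∈ Z, z ∈ A ∧ ∀ y ∈ Y, ¬G.Adj z y := fun z hz => mem_avoiders.1 (hZ hz)
  simp only [mem_union]
  rintro a (ha | ha) b (hb | hb)
  · exact hY a ha b hb
  · exact fun h => (hZA b hb).2 a ha h.symm
  · exact (hZA a ha).2 b hb
  · exact hA a (hZA a ha).1 b (hZA b hb).1

end Avoiders

section Extensions

variable {V : Type*} [DecidableEq V] {G : SimpleGraph V} [DecidableRel G.Adj] {A Y : Finset V}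

/-- For `A` independent and `Y ⊆ Aᶜ`, the number of independent sets `s` with `s \ A = Y`. -/
def extensionCount (G : SimpleGraph V) [DecidableRel G.Adj] (A Y : Finset V) : ℕ :=
  if G.IsIndepSet (Y : Set V) then 2 ^ #(G.avoiders A Y) else 0

lemma card_isIndepSet_sdiff_eq_extensionCount [Fintype V] (hA : G.IsIndepSet (A : Set V))
    (hY : Y ⊆ Aᶜ) :
    #{s : Finset V | G.IsIndepSet (s : Set V) ∧ s \ A = Y} = G.extensionCount A Y := by
  have hYA : Disjoint Y A := by simpa [subset_compl_iff_disjoint_right] using hY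
  unfold extensionCount
  split_ifs with hYi
  · rw [← card_powerset]
    refine card_nbij' (· ∩ A) (Y ∪ ·) ?_ ?_ ?_ ?_
    · intro s hs
      simp only [coe_filter, mem_univ, true_and, Set.mem_ofPred_eq] at hs
      obtain ⟨hs, rfl⟩ := hs
      simp only [coe_powerset, Set.mem_preimage, Set.mem_powerset_iff, coe_subset]
      intro a ha
      simp only [mem_avoiders, mem_sdiff]
      refine ⟨(mem_inter.1 ha).2, fun y hy => hs (mem_inter.1 ha).1 hy.1 ?_⟩
      rintro rfl; exact hy.2 (mem_inter.1 ha).2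
    · intro Z hZ
      simp only [coe_powerset, Set.mem_preimage, Set.mem_powerset_iff, coe_subset] at hZ
      simp only [coe_filter, mem_univ, true_and, Set.mem_ofPred_eq]
      refine ⟨isIndepSet_union_of_subset_avoiders hA hYi hZ, ?_⟩
      rw [union_sdiff_distrib, hYA.sdiff_eq_left,
        sdiff_eq_empty_iff_subset.2 (hZ.trans (avoiders_subset A Y)), union_empty]
    · intro s hs
      simp only [coe_filter, mem_univ, true_and, Set.mem_ofPred_eq] at hs
      simp [← hs.2, sdiff_union_inter]
    · intro Z hZ
      simp only [coe_powerset, Set.mem_preimage, Set.mem_powerset_iff, coe_subset] at hZ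
      dsimp only
      rw [union_inter_distrib_right, disjoint_iff_inter_eq_empty.1 hYA, empty_union]
      exact inter_eq_left.2 (hZ.trans (avoiders_subset A Y))
  · rw [card_eq_zero, filter_eq_empty_iff]
    rintro s - ⟨hs, rfl⟩
    exact hYi (hs.mono (by simp))

lemma numIndep_eq_card [Fintype V] :
    numIndep G = #{s : Finset V | G.IsIndepSet (s : Set V)} := by
  simp only [numIndep, ← isIndepSet_coe_iff, Nat.card_eq_fintype_card, Fintype.card_subtype]

lemma numIndep_eq_sum_extensionCount [Fintype V] (hA : G.IsIndepSet (A : Set V)) :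
    numIndep G = ∑ Y ∈ Aᶜ.powerset, G.extensionCount A Y := by
  rw [numIndep_eq_card, card_eq_sum_card_fiberwise (f := (· \ A)) (t := Aᶜ.powerset)]
  · refine sum_congr rfl fun Y hY => ?_
    rw [filter_filter]
    exact card_isIndepSet_sdiff_eq_extensionCount hA (mem_powerset.1 hY)
  · intro s _
    simp [sdiff_eq_inter_compl]

lemma extensionCount_empty : G.extensionCount A ∅ = 2 ^ #A := by
  simp [extensionCount, avoiders]

lemma extensionCount_singleton (b : V) :
    G.extensionCount A {b} = 2 ^ #(G.avoiders A {b}) := by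
  simp [extensionCount]

lemma extensionCount_eq_zero_of_adj {x y : V} (hx : x ∈ Y) (hy : y ∈ Y) (hxy : G.Adj x y) :
    G.extensionCount A Y = 0 :=
  if_neg fun h => isIndepSet_coe_iff.1 h x hx y hy hxy

lemma sum_extensionCount_insert_insert {x y : V} {C : Finset V} (hx : x ∉ insert y C)
    (hy : y ∉ C) (hxy : G.Adj x y) :
    ∑ Y ∈ (insert x (insert y C)).powerset, G.extensionCount A Y =
      ∑ Y ∈ C.powerset, (G.extensionCount A Y + G.extensionCount A (insert x Y) +
        G.extensionCount A (insert y Y)) := by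
  have hxyY : ∀ Y, G.extensionCount A (insert x (insert y Y)) = 0 := fun Y =>
    extensionCount_eq_zero_of_adj (mem_insert_self x _)
      (mem_insert_of_mem (mem_insert_self y Y)) hxy
  simp only [sum_powerset_insert hx, sum_powerset_insert hy, hxyY, sum_const_zero, add_zero,
    sum_add_distrib]
  ring

end Extensions

lemma numIndep_K2JoinE {n : ℕ} (hn : 2 ≤ n) : numIndep (K2JoinE n) = 2 ^ (n - 2) + 2 := by
  classical
  let v₀ : Fin n := ⟨0, by omega⟩
  let v₁ : Fin n := ⟨1, by omega⟩
  let A : Finset (Fin n) := {i | 2 ≤ (i : ℕ)}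
  have hAc : Aᶜ = insert v₀ (insert v₁ ∅) := by
    ext i
    simp only [A, v₀, v₁, compl_filter, not_le, mem_filter, mem_univ, true_and, mem_insert,
      Fin.ext_iff, notMem_empty, or_false]
    omega
  have hA : (K2JoinE n).IsIndepSet (A : Set (Fin n)) := by
    intro i hi j hj _ h
    simp only [A, coe_filter, mem_univ, true_and, Set.mem_ofPred_eq] at hi hj
    rcases h.2 with h | h <;> omega
  have hcard : #A = n - 2 := by
    have := card_add_card_compl A
    rw [hAc, insert_empty, card_pair (by simp [v₀, v₁, Fin.ext_iff])] at this
    simp only [Fintype.card_fin] at this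
    omega
  have hav : ∀ v : Fin n, (v : ℕ) < 2 → (K2JoinE n).avoiders A {v} = ∅ := by
    intro v hv
    ext i
    simp only [avoiders, A, K2JoinE, mem_filter, mem_univ, true_and, mem_singleton, forall_eq,
      notMem_empty, iff_false, not_and]
    intro hi h
    exact h (fun hiv => by omega) (Or.inr hv)
  rw [numIndep_eq_sum_extensionCount hA, hAc,
    sum_extensionCount_insert_insert (by simp [v₀, v₁, Fin.ext_iff]) (notMem_empty _)
      (show (K2JoinE n).Adj v₀ v₁ from ⟨by simp [v₀, v₁, Fin.ext_iff], by simp [v₀]⟩)]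
  simp [extensionCount_empty, extensionCount_singleton, hav, hcard, v₀, v₁]

section MaximumIndepSet

variable {V : Type*} [Fintype V] [DecidableEq V] {G : SimpleGraph V} [DecidableRel G.Adj]
  {A Y : Finset V}

lemma IsMaximumIndepSet.card_avoiders_add_card_le (hA : G.IsMaximumIndepSet A) (hY : Y ⊆ Aᶜ)
    (hYi : G.IsIndepSet (Y : Set V)) : #(G.avoiders A Y) + #Y ≤ #A := by
  have hdisj : Disjoint Y (G.avoiders A Y) :=
    (disjoint_of_subset_left hY disjoint_compl_left).mono_right (avoiders_subset A Y)
  rw [add_comm, ← card_union_of_disjoint hdisj]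
  exact hA.maximum _ (isIndepSet_union_of_subset_avoiders hA.isIndepSet hYi subset_rfl)

lemma IsMaximumIndepSet.extensionCount_mul_two_pow_le (hA : G.IsMaximumIndepSet A)
    (hY : Y ⊆ Aᶜ) : G.extensionCount A Y * 2 ^ #Y ≤ 2 ^ #A := by
  unfold extensionCount
  split_ifs with hYi
  · rw [← pow_add]
    exact Nat.pow_le_pow_right two_pos (hA.card_avoiders_add_card_le hY hYi)
  · simp

lemma IsMaximumIndepSet.card_avoiders_singleton_lt (hA : G.IsMaximumIndepSet A) {b : V}
    (hb : b ∈ Aᶜ) : #(G.avoiders A {b}) < #A := by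
  simpa using hA.card_avoiders_add_card_le (singleton_subset_iff.2 hb) (by simp)

lemma IsMaximumIndepSet.extensionCount_pair_mul_four_le (hA : G.IsMaximumIndepSet A)
    {b c : V} (hb : b ∈ Aᶜ) (hc : c ∈ Aᶜ) (hbc : b ≠ c) :
    G.extensionCount A {b, c} * 4 ≤ 2 ^ #A := by
  simpa [card_pair hbc] using
    hA.extensionCount_mul_two_pow_le (insert_subset hb (singleton_subset_iff.2 hc))

lemma IsMaximumIndepSet.extensionCount_triple_mul_eight_le (hA : G.IsMaximumIndepSet A)
    {b c d : V} (hb : b ∈ Aᶜ) (hc : c ∈ Aᶜ) (hd : d ∈ Aᶜ) (hbcd : b ∉ ({c, d} : Finset V))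
    (hcd : c ≠ d) : G.extensionCount A {b, c, d} * 8 ≤ 2 ^ #A := by
  simpa [card_insert_of_notMem hbcd, card_pair hcd] using hA.extensionCount_mul_two_pow_le
    (insert_subset hb (insert_subset hc (singleton_subset_iff.2 hd)))

lemma card_filter_not_adj_add_two_le (hdeg : ∀ v, 2 ≤ G.degree v)
    (hA : G.IsIndepSet (A : Set V)) {a : V} (ha : a ∈ A) :
    #{b ∈ Aᶜ | ¬G.Adj a b} + 2 ≤ #Aᶜ := by
  have hnbr : {b ∈ Aᶜ | G.Adj a b} = G.neighborFinset a := by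
    ext b
    simp only [mem_filter, mem_compl, mem_neighborFinset, and_iff_right_iff_imp]
    exact fun hab hb => isIndepSet_coe_iff.1 hA a ha b hb hab
  have := card_filter_add_card_filter_not (s := Aᶜ) (G.Adj a)
  rw [hnbr, card_neighborFinset_eq_degree] at this
  have := hdeg a
  omega

lemma extensionCount_le_one_of_card_lt (hdeg : ∀ v, 2 ≤ G.degree v)
    (hA : G.IsIndepSet (A : Set V)) (hY : Y ⊆ Aᶜ) (h : #Aᶜ < #Y + 2) :
    G.extensionCount A Y ≤ 1 := by
  have hempty : G.avoiders A Y = ∅ := by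
    refine eq_empty_of_forall_notMem fun a ha => ?_
    have ⟨haA, haY⟩ := mem_avoiders.1 ha
    have hsub : Y ⊆ {b ∈ Aᶜ | ¬G.Adj a b} := fun y hy => mem_filter.2 ⟨hY hy, haY y hy⟩
    have := card_le_card hsub
    have := card_filter_not_adj_add_two_le hdeg hA haA
    omega
  unfold extensionCount
  split_ifs <;> simp [hempty]

lemma sum_card_avoiders_singleton_le (hdeg : ∀ v, 2 ≤ G.degree v)
    (hA : G.IsIndepSet (A : Set V)) :
    ∑ b ∈ Aᶜ, #(G.avoiders A {b}) ≤ #A * (#Aᶜ - 2) := by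
  have hbelow : ∀ b, G.avoiders A {b} = A.bipartiteBelow (fun a b => ¬G.Adj a b) b := by
    intro b; simp [avoiders, bipartiteBelow]
  simp only [hbelow, ← sum_card_bipartiteAbove_eq_sum_card_bipartiteBelow, bipartiteAbove]
  rw [← smul_eq_mul, ← sum_const]
  refine sum_le_sum fun a ha => ?_
  have := card_filter_not_adj_add_two_le hdeg hA ha
  omega

lemma IsMaximumIndepSet.sum_extensionCount_le_of_five_le (hA : G.IsMaximumIndepSet A)
    (h5 : 5 ≤ #Aᶜ) : ∑ Y ∈ Aᶜ.powerset, G.extensionCount A Y ≤ 2 ^ (#A + #Aᶜ - 2) := by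
  set α := #A
  set β := #Aᶜ
  have hterm : ∀ Y ∈ Aᶜ.powerset,
      G.extensionCount A Y * 2 ^ β ≤ 2 ^ α * 2 ^ (β - #Y) := by
    intro Y hY
    have hYβ : #Y ≤ β := card_le_card (mem_powerset.1 hY)
    calc G.extensionCount A Y * 2 ^ β = G.extensionCount A Y * 2 ^ #Y * 2 ^ (β - #Y) := by
          rw [mul_assoc, ← pow_add, Nat.add_sub_cancel' hYβ]
      _ ≤ 2 ^ α * 2 ^ (β - #Y) :=
          Nat.mul_le_mul_right _ (hA.extensionCount_mul_two_pow_le (mem_powerset.1 hY))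
  have hbinom : ∑ Y ∈ Aᶜ.powerset, 2 ^ (β - #Y) = 3 ^ β := by
    simpa using sum_pow_mul_eq_add_pow (1 : ℕ) 2 Aᶜ
  have key : (∑ Y ∈ Aᶜ.powerset, G.extensionCount A Y) * 2 ^ β * 4 ≤
      2 ^ (α + β - 2) * 2 ^ β * 4 := by
    calc (∑ Y ∈ Aᶜ.powerset, G.extensionCount A Y) * 2 ^ β * 4
        = (∑ Y ∈ Aᶜ.powerset, G.extensionCount A Y * 2 ^ β) * 4 := by rw [sum_mul]
      _ ≤ (∑ Y ∈ Aᶜ.powerset, 2 ^ α * 2 ^ (β - #Y)) * 4 :=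
          Nat.mul_le_mul_right _ (sum_le_sum hterm)
      _ = 2 ^ α * (3 ^ β * 4) := by rw [← mul_sum, hbinom, mul_assoc]
      _ ≤ 2 ^ α * 4 ^ β := Nat.mul_le_mul_left _ (three_pow_mul_four_le_four_pow h5)
      _ = 2 ^ (α + β - 2) * 2 ^ β * 4 := by
          obtain ⟨k, hk⟩ : ∃ k, β = k + 2 := ⟨β - 2, by omega⟩
          rw [hk, show α + (k + 2) - 2 = α + k by omega, show (4 : ℕ) = 2 ^ 2 by norm_num,
            ← pow_mul]
          ring
  exact Nat.le_of_mul_le_mul_right (Nat.le_of_mul_le_mul_right key (by norm_num)) (by positivity)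

lemma sum_extensionCount_le_of_compl_eq_pair (hdeg : ∀ v, 2 ≤ G.degree v)
    (hA : G.IsIndepSet (A : Set V)) {x y : V} (hB : Aᶜ = insert x (insert y ∅))
    (hxy : G.Adj x y) :
    ∑ Y ∈ Aᶜ.powerset, G.extensionCount A Y ≤ 2 ^ (#A + #Aᶜ - 2) + 2 := by
  have hβ : #Aᶜ = 2 := by rw [hB, insert_empty, card_pair (G.ne_of_adj hxy)]
  have hsingle : ∀ b ∈ Aᶜ, G.extensionCount A {b} ≤ 1 := fun b hb =>
    extensionCount_le_one_of_card_lt hdeg hA (singleton_subset_iff.2 hb) (by simp [hβ])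
  have hx := hsingle x (by simp [hB])
  have hy := hsingle y (by simp [hB])
  rw [hβ, Nat.add_sub_cancel, hB, sum_extensionCount_insert_insert (by simp [G.ne_of_adj hxy])
    (notMem_empty y) hxy, powerset_empty, sum_singleton, extensionCount_empty, insert_empty,
    insert_empty]
  omega

lemma sum_extensionCount_le_of_compl_eq_triple (hdeg : ∀ v, 2 ≤ G.degree v)
    (hA : G.IsMaximumIndepSet A) {x y z : V} (hB : Aᶜ = {x, y, z})
    (hx : x ∉ ({y, z} : Finset V)) (hy : y ≠ z) (hxy : G.Adj x y) (hα : #A ≠ 2) :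
    ∑ Y ∈ Aᶜ.powerset, G.extensionCount A Y ≤ 2 ^ (#A + #Aᶜ - 2) + 2 := by
  have hβ : #Aᶜ = 3 := by rw [hB, card_insert_of_notMem hx, card_pair hy]
  have hxz : x ≠ z := fun h => hx (by simp [h])
  obtain ⟨hxB, hyB, hzB⟩ : x ∈ Aᶜ ∧ y ∈ Aᶜ ∧ z ∈ Aᶜ := by simp [hB]
  have hlt := fun b (hb : b ∈ Aᶜ) => Nat.le_sub_one_of_lt (hA.card_avoiders_singleton_lt hb)
  have hsum := sum_card_avoiders_singleton_le hdeg hA.isIndepSet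
  rw [hβ, hB, sum_insert hx, sum_pair hy] at hsum
  have hsingles := sum_three_two_pow_le (m := #A - 1) (hlt x hxB) (hlt y hyB) (hlt z hzB)
    (by omega)
  have hpair : ∀ b ∈ Aᶜ, b ≠ z →
      G.extensionCount A {b, z} ≤ 1 ∧ G.extensionCount A {b, z} * 4 ≤ 2 ^ #A := by
    intro b hb hbz
    have hsub : {b, z} ⊆ Aᶜ := insert_subset hb (singleton_subset_iff.2 hzB)
    exact ⟨extensionCount_le_one_of_card_lt hdeg hA.isIndepSet hsub
      (by rw [card_pair hbz]; omega), hA.extensionCount_pair_mul_four_le hb hzB hbz⟩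
  have := hpair x hxB hxz
  have := hpair y hyB hy
  have hpos := (hA.card_avoiders_singleton_lt hxB).pos
  have hpow : 2 ^ #A = 2 * 2 ^ (#A - 1) := by rw [← pow_succ', Nat.sub_add_cancel hpos]
  have hsmall : 2 ^ #A = 2 ∨ 8 ≤ 2 ^ #A := by
    rcases (show #A = 1 ∨ 3 ≤ #A by omega) with h | h
    · simp [h]
    · exact Or.inr (by simpa using Nat.pow_le_pow_right two_pos h)
  rw [hβ, show #A + 3 - 2 = #A + 1 by omega, pow_succ, hB,
    sum_extensionCount_insert_insert hx (by simpa using hy) hxy, sum_powerset_singleton,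
    extensionCount_empty]
  simp only [insert_empty, extensionCount_singleton] at *
  omega

lemma sum_extensionCount_le_of_compl_eq_quadruple (hdeg : ∀ v, 2 ≤ G.degree v)
    (hA : G.IsMaximumIndepSet A) {x y z w : V} (hB : Aᶜ = {x, y, z, w})
    (hx : x ∉ ({y, z, w} : Finset V)) (hy : y ∉ ({z, w} : Finset V)) (hzw : z ≠ w)
    (hxy : G.Adj x y) :
    ∑ Y ∈ Aᶜ.powerset, G.extensionCount A Y ≤ 2 ^ (#A + #Aᶜ - 2) + 2 := by
  have hβ : #Aᶜ = 4 := by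
    rw [hB, card_insert_of_notMem hx, card_insert_of_notMem hy, card_pair hzw]
  have hxzw : x ∉ ({z, w} : Finset V) := fun h => hx (mem_insert_of_mem h)
  obtain ⟨hxz, hxw⟩ : x ≠ z ∧ x ≠ w := by simpa using hxzw
  obtain ⟨hyz, hyw⟩ : y ≠ z ∧ y ≠ w := by simpa using hy
  obtain ⟨hxB, hyB, hzB, hwB⟩ : x ∈ Aᶜ ∧ y ∈ Aᶜ ∧ z ∈ Aᶜ ∧ w ∈ Aᶜ := by simp [hB]
  have hlt := fun b (hb : b ∈ Aᶜ) => Nat.le_sub_one_of_lt (hA.card_avoiders_singleton_lt hb)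
  have hsum := sum_card_avoiders_singleton_le hdeg hA.isIndepSet
  rw [hβ, hB, sum_insert hx, sum_insert hy, sum_pair hzw] at hsum
  have hsingles := sum_four_two_pow_le (m := #A - 1) (hlt x hxB) (hlt y hyB) (hlt z hzB)
    (hlt w hwB) (by omega)
  have hpow : 2 ^ #A = 2 * 2 ^ (#A - 1) := by
    rw [← pow_succ', Nat.sub_add_cancel (hA.card_avoiders_singleton_lt hxB).pos]
  have := hA.extensionCount_pair_mul_four_le hxB hzB hxz
  have := hA.extensionCount_pair_mul_four_le hxB hwB hxw
  have := hA.extensionCount_pair_mul_four_le hyB hzB hyz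
  have := hA.extensionCount_pair_mul_four_le hyB hwB hyw
  have := hA.extensionCount_pair_mul_four_le hzB hwB hzw
  have := hA.extensionCount_triple_mul_eight_le hxB hzB hwB hxzw hzw
  have := hA.extensionCount_triple_mul_eight_le hyB hzB hwB hy hzw
  rw [hβ, show #A + 4 - 2 = #A + 2 by omega, pow_add, hB,
    sum_extensionCount_insert_insert hx hy hxy, sum_powerset_insert (by simpa using hzw),
    sum_powerset_singleton, sum_powerset_singleton, extensionCount_empty]
  simp only [insert_empty, extensionCount_singleton] at *
  omega

lemma sum_extensionCount_le_of_card_compl_le_four (hdeg : ∀ v, 2 ≤ G.degree v)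
    (hA : G.IsMaximumIndepSet A) {x y : V} (hx : x ∈ Aᶜ) (hy : y ∈ Aᶜ) (hxy : G.Adj x y)
    (h4 : #Aᶜ ≤ 4) (h5 : #A + #Aᶜ ≠ 5) :
    ∑ Y ∈ Aᶜ.powerset, G.extensionCount A Y ≤ 2 ^ (#A + #Aᶜ - 2) + 2 := by
  obtain ⟨C, hC⟩ : ∃ C, C = (Aᶜ.erase x).erase y := ⟨_, rfl⟩
  have hyC : y ∉ C := by simp [hC]
  have hxC : x ∉ insert y C := by simp [hC, G.ne_of_adj hxy]
  have hB : Aᶜ = insert x (insert y C) := by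
    rw [hC, insert_erase (mem_erase.2 ⟨(G.ne_of_adj hxy).symm, hy⟩), insert_erase hx]
  have hcard : #Aᶜ = #C + 2 := by
    rw [hB, card_insert_of_notMem hxC, card_insert_of_notMem hyC]
  rcases (show #C = 0 ∨ #C = 1 ∨ #C = 2 by omega) with h | h | h
  · rw [card_eq_zero] at h
    subst h
    exact sum_extensionCount_le_of_compl_eq_pair hdeg hA.isIndepSet hB hxy
  · obtain ⟨z, rfl⟩ := card_eq_one.1 h
    exact sum_extensionCount_le_of_compl_eq_triple hdeg hA hB hxC (by simpa using hyC) hxy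
      (by omega)
  · obtain ⟨z, w, hzw, rfl⟩ := card_eq_two.1 h
    exact sum_extensionCount_le_of_compl_eq_quadruple hdeg hA hB hxC hyC hzw hxy

lemma IsIndepSet.exists_adj_compl_of_not_isBipartite (hA : G.IsIndepSet (A : Set V))
    (hG : ¬G.IsBipartite) : ∃ x ∈ Aᶜ, ∃ y ∈ Aᶜ, G.Adj x y := by
  by_contra! h
  refine hG (IsBipartiteWith.isBipartite (s := A) (t := (A : Set V)ᶜ)
    ⟨disjoint_compl_right, fun v w hvw => ?_⟩)
  by_cases hv : v ∈ A <;> by_cases hw : w ∈ A <;> simp only [mem_coe, Set.mem_compl_iff, hv, hw]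
  · exact (isIndepSet_coe_iff.1 hA v hv w hw hvw).elim
  · simp
  · simp
  · exact (h v (mem_compl.2 hv) w (mem_compl.2 hw) hvw).elim

lemma numIndep_le_of_two_le_degree (hdeg : ∀ v, 2 ≤ G.degree v) (hG : ¬G.IsBipartite)
    (h5 : Fintype.card V ≠ 5) : numIndep G ≤ 2 ^ (Fintype.card V - 2) + 2 := by
  obtain ⟨A, hA⟩ := G.maximumIndepSet_exists
  obtain ⟨x, hx, y, hy, hxy⟩ := hA.isIndepSet.exists_adj_compl_of_not_isBipartite hG
  rw [numIndep_eq_sum_extensionCount hA.isIndepSet, ← card_add_card_compl A]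
  rw [← card_add_card_compl A] at h5
  by_cases hβ : 5 ≤ #Aᶜ
  · exact (hA.sum_extensionCount_le_of_five_le hβ).trans (Nat.le_add_right _ _)
  · exact sum_extensionCount_le_of_card_compl_le_four hdeg hA hx hy hxy (by omega) h5

end MaximumIndepSet

end SimpleGraph

lemma LConnected.two_le_degree {V : Type*} [Fintype V] {G : SimpleGraph V}
    [DecidableRel G.Adj] (hG : LConnected G 2) (v : V) : 2 ≤ G.degree v := by
  classical
  have hnbr : ∀ w, w ≠ v → ∃ u, u ≠ w ∧ G.Adj v u := by
    intro w hwv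
    obtain ⟨u, huv, huw⟩ : ∃ u, u ≠ v ∧ u ≠ w := by
      by_contra! h
      have : (univ : Finset V) ⊆ {v, w} := fun u _ => by
        by_cases huv : u = v
        · simp [huv]
        · simp [h u huv]
      have := (card_le_card this).trans card_le_two
      have := hG.1
      rw [card_univ] at *
      omega
    have : Nontrivial ↥((↑({w} : Finset V) : Set V)ᶜ) :=
      Set.nontrivial_coe_sort.2 ⟨v, by simpa using hwv.symm, u, by simpa using huw, huv.symm⟩
    obtain ⟨⟨u', hu'⟩, hadj⟩ :=
      (hG.2 {w} (by simp)).preconnected.exists_adj_of_nontrivial ⟨v, by simpa using hwv.symm⟩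
    exact ⟨u', by simpa using hu', by simpa using hadj⟩
  obtain ⟨w, hwv⟩ := Fintype.exists_ne_of_one_lt_card (by have := hG.1; omega) v
  obtain ⟨u₁, -, h₁⟩ := hnbr w hwv
  obtain ⟨u₂, h₂₁, h₂⟩ := hnbr u₁ (G.ne_of_adj h₁).symm
  rw [← card_neighborFinset_eq_degree, ← card_pair h₂₁]
  exact card_le_card (by simp [insert_subset_iff, h₁, h₂])

theorem max_indep_sets_2conn_3chrom_general {V : Type*} [Fintype V] (n : ℕ) (hn5 : n ≠ 5)
    (G : SimpleGraph V) (hcard : Fintype.card V = n)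
    (hchrom : G.chromaticNumber = 3) (hconn : LConnected G 2) :
    numIndep (K2JoinE n) = 2 ^ (n - 2) + 2 ∧
    numIndep G ≤ 2 ^ (n - 2) + 2 := by
  classical
  subst hcard
  refine ⟨numIndep_K2JoinE hconn.1.le, numIndep_le_of_two_le_degree hconn.two_le_degree ?_ hn5⟩
  rw [← chromaticNumber_le_two_iff_isBipartite, hchrom]
  norm_num

/-- For `n ≥ 4`, `n ≠ 5`, every `n`-vertex `3`-chromatic `2`-connected graph `G` satisfies
`i(G) ≤ 2^(n-2) + 2 = i(K_2 ∨ E_{n-2})`. -/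
theorem max_indep_sets_2conn_3chrom {V : Type*} [Fintype V] (n : ℕ) (hn : 4 ≤ n) (hn5 : n ≠ 5)
    (G : SimpleGraph V) (hcard : Fintype.card V = n)
    (hchrom : G.chromaticNumber = 3) (hconn : LConnected G 2) :
    numIndep (K2JoinE n) = 2 ^ (n - 2) + 2 ∧
    numIndep G ≤ 2 ^ (n - 2) + 2 :=
  max_indep_sets_2conn_3chrom_general n hn5 G hcard hchrom hconn
end

section
/- Let n ≥ 4. If G is a 2-connected simple graph on n vertices with exactly n + 1 edges, then G is isomorphic to a theta graph θ_{a,b,c} for some a, b, c with a + b + c = n + 1. -/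
open SimpleGraph

/-- `G` is (equal to) the theta graph `θ_{a,b,c}`: there are two distinct vertices `v`, `w`
joined by three internally disjoint, pairwise edge-disjoint paths of lengths `a`, `b`, `c`,
and these paths exhaust all vertices and edges of `G`. -/
def IsTheta {V : Type*} (G : SimpleGraph V) (a b c : ℕ) : Prop :=
  ∃ (v w : V) (_ : v ≠ w) (p q r : G.Walk v w),
    p.IsPath ∧ q.IsPath ∧ r.IsPath ∧
    p.length = a ∧ q.length = b ∧ r.length = c ∧
    (∀ x, x ∈ p.support → x ∈ q.support → x = v ∨ x = w) ∧
    (∀ x, x ∈ p.support → x ∈ r.support → x = v ∨ x = w) ∧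
    (∀ x, x ∈ q.support → x ∈ r.support → x = v ∨ x = w) ∧
    p.edges.Disjoint q.edges ∧ p.edges.Disjoint r.edges ∧ q.edges.Disjoint r.edges ∧
    (∀ x : V, x ∈ p.support ∨ x ∈ q.support ∨ x ∈ r.support) ∧
    (∀ e ∈ G.edgeSet, e ∈ p.edges ∨ e ∈ q.edges ∨ e ∈ r.edges)

/-!
Since `G` is 2-connected, every vertex has degree at least 2, and since `G - v` is connected for
every `v`, counting the edges of `G - v` gives `deg v ≤ |E| - |V| + 2 = 3`. The degree sum
`2|V| + 2` then forces exactly two vertices `v`, `w` of degree 3, all others having degree 2.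
From each of the three neighbours `x` of `v` choose a path to `w` in `G - v`. Its inner vertices
have degree 2, so all their edges lie on it; hence any walk avoiding `v` and `w` that starts on
it stays on it. If two of these arms met away from `w`, following the second one back would put
its first vertex on the first arm, next to `v`, forcing the two first edges at `v` to coincide.
Finally the arms contain every vertex and edge, since their union is closed under adjacency in
the connected graph `G - w`.
-/

open Finset

theorem LConnected.le_degree {V : Type*} [Fintype V] {G : SimpleGraph V} [DecidableRel G.Adj]
    {ℓ : ℕ} (h : LConnected G ℓ) (u : V) : ℓ ≤ G.degree u := by
  classical
  by_contra! hu
  set s := G.neighborFinset u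
  have hs : #s < ℓ := by rwa [card_neighborFinset_eq_degree]
  obtain ⟨b, hb⟩ : (insert u s)ᶜ.Nonempty := by
    rw [← card_pos, card_compl]
    have := card_insert_le u s
    have := h.1
    omega
  rw [mem_compl, mem_insert, not_or] at hb
  have hus : u ∉ s := by simp [s]
  -- in `G - N(u)` the vertex `u` is isolated, yet `b` lies in the same component
  obtain ⟨q⟩ := (h.2 s hs).preconnected ⟨u, by simpa using hus⟩ ⟨b, by simpa using hb.2⟩
  have hnil : ¬ q.Nil := Walk.not_nil_of_ne (by simpa using Ne.symm hb.1)
  exact (q.snd.2 : (q.snd : V) ∉ (s : Set V)) (by simpa [s] using Walk.adj_snd hnil)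

namespace SimpleGraph

variable {V : Type*} {G : SimpleGraph V}

theorem Walk.IsPath.mem_edges_of_degree_eq_two {u v z y : V} [Fintype (G.neighborSet z)]
    {p : G.Walk u v} (hp : p.IsPath) (hz : z ∈ p.support) (hzu : z ≠ u) (hzv : z ≠ v)
    (hdeg : G.degree z = 2) (hy : G.Adj z y) : s(z, y) ∈ p.edges := by
  obtain ⟨i, rfl, hi⟩ := Walk.mem_support_iff_exists_getVert.mp hz
  have hi0 : i ≠ 0 := by rintro rfl; simp at hzu
  have hil : i < p.length := lt_of_le_of_ne hi (by rintro rfl; simp at hzv)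
  have hnbr : p.toSubgraph.neighborSet (p.getVert i) = G.neighborSet (p.getVert i) :=
    Set.eq_of_subset_of_ncard_le (p.toSubgraph.neighborSet_subset _)
      (by rw [hp.ncard_neighborSet_toSubgraph_internal_eq_two hi0 hil, Set.ncard_eq_toFinset_card',
        Set.toFinset_card, card_neighborSet_eq_degree, hdeg]) (Set.toFinite _)
  rw [← Walk.adj_toSubgraph_iff_mem_edges, ← Subgraph.mem_neighborSet, hnbr]
  exact hy

theorem Walk.end_mem_of_darts_closed {S : Set V} {a b : V} (p : G.Walk a b) (ha : a ∈ S)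
    (hS : ∀ d ∈ p.darts, d.fst ∈ S → d.snd ∈ S) : b ∈ S := by
  induction p with
  | nil => exact ha
  | cons h p ih =>
    simp only [Walk.darts_cons, List.mem_cons, forall_eq_or_imp] at hS
    exact ih (hS.1 ha) hS.2

theorem exists_isPath_notMem_support {v a b : V} (h : (G.induce {v}ᶜ).Connected) (ha : a ≠ v)
    (hb : b ≠ v) : ∃ p : G.Walk a b, p.IsPath ∧ v ∉ p.support := by
  classical
  obtain ⟨q⟩ := h.preconnected ⟨a, ha⟩ ⟨b, hb⟩
  let p := q.map (Embedding.induce _).toHom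
  refine ⟨p.bypass, p.bypass_isPath, fun hv => ?_⟩
  obtain ⟨x, -, hx⟩ :=
    List.mem_map.mp (Walk.support_map _ q ▸ p.support_bypass_subset_support hv)
  exact x.2 hx

theorem mem_of_adj_closed_of_connected_induce_compl {w a : V} (hw : (G.induce {w}ᶜ).Connected)
    {S : Set V} (haS : a ∈ S) (haw : a ≠ w) (hwS : w ∈ S)
    (hS : ∀ z ∈ S, z ≠ w → ∀ u, G.Adj z u → u ∈ S) (b : V) : b ∈ S := by
  obtain rfl | hbw := eq_or_ne b w
  · exact hwS
  obtain ⟨p, -, hwp⟩ := exists_isPath_notMem_support hw haw hbw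
  refine p.end_mem_of_darts_closed haS fun d hd hfst => hS _ hfst ?_ _ d.adj
  exact ne_of_mem_of_not_mem (p.dart_fst_mem_support_of_mem_darts hd) hwp

theorem card_edgeFinset_eq_sum_length [Fintype G.edgeSet] {ι : Type*} [Fintype ι]
    [DecidableEq V] {u v : V} (P : ι → G.Walk u v) (hP : ∀ i, (P i).IsTrail)
    (hdisj : Pairwise fun i j => (P i).edges.Disjoint (P j).edges)
    (hcover : ∀ e ∈ G.edgeSet, ∃ i, e ∈ (P i).edges) :
    #G.edgeFinset = ∑ i, (P i).length := by
  have hE : G.edgeFinset = univ.biUnion fun i => (P i).edges.toFinset := by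
    ext e
    simp only [mem_edgeFinset, mem_biUnion, mem_univ, true_and, List.mem_toFinset]
    exact ⟨hcover e, fun ⟨i, he⟩ => (P i).edges_subset_edgeSet he⟩
  rw [hE, card_biUnion fun i _ j _ hij => List.disjoint_toFinset_iff_disjoint.mpr (hdisj hij)]
  exact sum_congr rfl fun i _ => by
    rw [List.toFinset_card_of_nodup (hP i).edges_nodup, Walk.length_edges]

section Finite

variable [Fintype V] [DecidableRel G.Adj]

theorem degree_add_card_le_of_connected_induce_compl [DecidableEq V] {v : V}
    (h : (G.induce {v}ᶜ).Connected) : G.degree v + Fintype.card V ≤ #G.edgeFinset + 2 := by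
  have hcard := h.card_vert_le_card_edgeSet_add_one
  rw [Nat.card_eq_fintype_card, Fintype.card_compl_set, Set.card_singleton,
    Nat.card_eq_fintype_card, ← edgeFinset_card, card_edgeFinset_induce_compl_singleton,
    card_edgeFinset_deleteIncidenceSet] at hcard
  have := G.degree_le_card_edgeFinset v
  omega

theorem card_filter_degree_eq_three (hmin : ∀ z, 2 ≤ G.degree z)
    (hmax : ∀ z, G.degree z ≤ 3) (hE : #G.edgeFinset = Fintype.card V + 1) :
    #{z | G.degree z = 3} = 2 := by
  have hsum : ∑ z, G.degree z = ∑ z, (2 + if G.degree z = 3 then 1 else 0) :=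
    sum_congr rfl fun z _ => by have := hmin z; have := hmax z; split_ifs <;> omega
  rw [sum_degrees_eq_twice_card_edges, sum_add_distrib, sum_boole, sum_const, card_univ,
    smul_eq_mul, hE, Nat.cast_id] at hsum
  omega

variable {v w : V}

theorem mem_support_of_walk_avoiding (hdeg : ∀ z, z ≠ v → z ≠ w → G.degree z = 2)
    {x a b : V} (hx : G.Adj v x) {q : G.Walk x w} (hq : q.IsPath) (hvq : v ∉ q.support)
    (r : G.Walk a b) (hr : ∀ u ∈ r.support, u ≠ v ∧ u ≠ w) (ha : a ∈ q.support) :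
    b ∈ q.support := by
  refine r.end_mem_of_darts_closed (S := {u | u ∈ q.support}) ha fun d hd hfst => ?_
  obtain ⟨hv, hw⟩ := hr d.fst (r.dart_fst_mem_support_of_mem_darts hd)
  have he := (hq.cons hvq (h := hx)).mem_edges_of_degree_eq_two (List.mem_cons_of_mem _ hfst)
    hv hw (hdeg _ hv hw) d.adj
  rcases List.mem_cons.mp (Walk.snd_mem_support_of_mem_edges _ he) with h | h
  · exact absurd h (hr d.snd (r.dart_snd_mem_support_of_mem_darts hd)).1
  · exact h

theorem eq_of_mem_support_of_mem_support (hdeg : ∀ z, z ≠ v → z ≠ w → G.degree z = 2)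
    {x x' z : V} (hx : G.Adj v x) (hx' : G.Adj v x') (hxx' : x ≠ x') {q : G.Walk x w}
    {q' : G.Walk x' w} (hq : q.IsPath) (hq' : q'.IsPath) (hvq : v ∉ q.support)
    (hvq' : v ∉ q'.support) (hz : z ∈ q.support) (hz' : z ∈ q'.support) : z = w := by
  classical
  by_contra hzw
  have hr : ∀ u ∈ (q'.takeUntil z hz').reverse.support, u ≠ v ∧ u ≠ w := by
    intro u hu
    rw [Walk.support_reverse, List.mem_reverse] at hu
    exact ⟨ne_of_mem_of_not_mem (q'.support_takeUntil_subset_support hz' hu) hvq',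
      ne_of_mem_of_not_mem hu (Walk.endpoint_notMem_support_takeUntil hq' hz' (Ne.symm hzw))⟩
  have hx'q : x' ∈ q.support := mem_support_of_walk_avoiding hdeg hx hq hvq _ hr hz
  obtain ⟨hx'v, hx'w⟩ := hr x' (Walk.end_mem_support _)
  have he := (hq.cons hvq (h := hx)).mem_edges_of_degree_eq_two (List.mem_cons_of_mem _ hx'q)
    hx'v hx'w (hdeg _ hx'v hx'w) hx'.symm
  rw [Walk.edges_cons, List.mem_cons, Sym2.eq_swap, Sym2.congr_right] at he
  rcases he with h | h
  · exact hxx' h.symm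
  · exact hvq (q.fst_mem_support_of_mem_edges h)

theorem edges_disjoint_of_ne (hdeg : ∀ z, z ≠ v → z ≠ w → G.degree z = 2) {x x' : V}
    (hx : G.Adj v x) (hx' : G.Adj v x') (hxx' : x ≠ x') {q : G.Walk x w} {q' : G.Walk x' w}
    (hq : q.IsPath) (hq' : q'.IsPath) (hvq : v ∉ q.support) (hvq' : v ∉ q'.support) :
    (Walk.cons hx q).edges.Disjoint (Walk.cons hx' q').edges := by
  intro e he he'
  rw [Walk.edges_cons, List.mem_cons] at he he'
  rcases he with rfl | he <;> rcases he' with he' | he'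
  · exact hxx' (Sym2.congr_right.mp he')
  · exact hvq' (q'.fst_mem_support_of_mem_edges he')
  · exact hvq (q.fst_mem_support_of_mem_edges (he' ▸ he))
  · induction e using Sym2.ind with
    | h a b =>
      have ha := eq_of_mem_support_of_mem_support hdeg hx hx' hxx' hq hq' hvq hvq'
        (q.fst_mem_support_of_mem_edges he) (q'.fst_mem_support_of_mem_edges he')
      have hb := eq_of_mem_support_of_mem_support hdeg hx hx' hxx' hq hq' hvq hvq'
        (q.snd_mem_support_of_mem_edges he) (q'.snd_mem_support_of_mem_edges he')
      exact (q.adj_of_mem_edges he).ne (ha.trans hb.symm)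

theorem exists_mem_edges_of_adj (hdeg : ∀ z, z ≠ v → z ≠ w → G.degree z = 2) {ι : Type*}
    {P : ι → G.Walk v w} (hP : ∀ i, (P i).IsPath)
    (hN : ∀ y, G.Adj v y → ∃ i, s(v, y) ∈ (P i).edges) {i : ι} {a b : V}
    (ha : a ∈ (P i).support) (haw : a ≠ w) (hab : G.Adj a b) :
    ∃ j, s(a, b) ∈ (P j).edges := by
  obtain rfl | hav := eq_or_ne a v
  · exact hN b hab
  · exact ⟨i, (hP i).mem_edges_of_degree_eq_two ha hav haw (hdeg a hav haw) hab⟩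

theorem exists_mem_support_of_forall_adj (hdeg : ∀ z, z ≠ v → z ≠ w → G.degree z = 2)
    (hw : (G.induce {w}ᶜ).Connected) (hvw : v ≠ w) {ι : Type*} [Nonempty ι]
    {P : ι → G.Walk v w} (hP : ∀ i, (P i).IsPath)
    (hN : ∀ y, G.Adj v y → ∃ i, s(v, y) ∈ (P i).edges) (z : V) :
    ∃ i, z ∈ (P i).support := by
  inhabit ι
  refine mem_of_adj_closed_of_connected_induce_compl (S := {z | ∃ i, z ∈ (P i).support}) hw
    ⟨default, (P default).start_mem_support⟩ hvw ⟨default, (P default).end_mem_support⟩ ?_ z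
  rintro a ⟨i, ha⟩ haw b hab
  obtain ⟨j, he⟩ := exists_mem_edges_of_adj hdeg hP hN ha haw hab
  exact ⟨j, (P j).snd_mem_support_of_mem_edges he⟩

theorem exists_mem_edges_of_forall_adj (hdeg : ∀ z, z ≠ v → z ≠ w → G.degree z = 2)
    (hw : (G.induce {w}ᶜ).Connected) (hvw : v ≠ w) {ι : Type*} [Nonempty ι]
    {P : ι → G.Walk v w} (hP : ∀ i, (P i).IsPath)
    (hN : ∀ y, G.Adj v y → ∃ i, s(v, y) ∈ (P i).edges) :
    ∀ e ∈ G.edgeSet, ∃ i, e ∈ (P i).edges := by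
  have hcover := exists_mem_support_of_forall_adj hdeg hw hvw hP hN
  refine Sym2.ind fun a b (hab : G.Adj a b) => ?_
  obtain rfl | haw := eq_or_ne a w
  · obtain ⟨i, hb⟩ := hcover b
    simpa only [Sym2.eq_swap] using exists_mem_edges_of_adj hdeg hP hN hb hab.ne' hab.symm
  · obtain ⟨i, ha⟩ := hcover a
    exact exists_mem_edges_of_adj hdeg hP hN ha haw hab

end Finite

end SimpleGraph

theorem isTheta_of_fin_three {V : Type*} {G : SimpleGraph V} {v w : V} (hvw : v ≠ w)
    (P : Fin 3 → G.Walk v w) (hP : ∀ i, (P i).IsPath)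
    (hsupp : Pairwise fun i j => ∀ z ∈ (P i).support, z ∈ (P j).support → z = v ∨ z = w)
    (hedges : Pairwise fun i j => (P i).edges.Disjoint (P j).edges)
    (hV : ∀ z, ∃ i, z ∈ (P i).support) (hE : ∀ e ∈ G.edgeSet, ∃ i, e ∈ (P i).edges) :
    IsTheta G (P 0).length (P 1).length (P 2).length :=
  ⟨v, w, hvw, P 0, P 1, P 2, hP 0, hP 1, hP 2, rfl, rfl, rfl, hsupp (by decide),
    hsupp (by decide), hsupp (by decide), hedges (by decide), hedges (by decide),
    hedges (by decide), fun z => by simpa [Fin.exists_fin_succ, or_assoc] using hV z,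
    fun e he => by simpa [Fin.exists_fin_succ, or_assoc] using hE e he⟩

theorem SimpleGraph.exists_isTheta {V : Type*} [Fintype V] {G : SimpleGraph V}
    [DecidableRel G.Adj] {v w : V} (hvw : v ≠ w) (hv : (G.induce {v}ᶜ).Connected)
    (hw : (G.induce {w}ᶜ).Connected) (hdv : G.degree v = 3)
    (hdeg : ∀ z, z ≠ v → z ≠ w → G.degree z = 2) :
    ∃ a b c, a + b + c = #G.edgeFinset ∧ IsTheta G a b c := by
  classical
  let e : Fin 3 ≃ G.neighborSet v :=
    (Fintype.equivFinOfCardEq (by rw [card_neighborSet_eq_degree, hdv])).symm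
  have hadj (i : Fin 3) : G.Adj v (e i) := (e i).2
  choose q hq hvq using fun i => exists_isPath_notMem_support hv (hadj i).ne' hvw.symm
  let P i : G.Walk v w := Walk.cons (hadj i) (q i)
  have hP (i : Fin 3) : (P i).IsPath := (hq i).cons (hvq i)
  have hne : Pairwise fun i j => (e i : V) ≠ e j :=
    fun i j hij => Subtype.coe_injective.ne (e.injective.ne hij)
  have hN (y : V) (hy : G.Adj v y) : ∃ i, s(v, y) ∈ (P i).edges :=
    ⟨e.symm ⟨y, hy⟩, by simp [P]⟩
  have hedges : Pairwise fun i j => (P i).edges.Disjoint (P j).edges := fun i j hij =>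
    edges_disjoint_of_ne hdeg (hadj i) (hadj j) (hne hij) (hq i) (hq j) (hvq i) (hvq j)
  have hsupp :
      Pairwise fun i j => ∀ z ∈ (P i).support, z ∈ (P j).support → z = v ∨ z = w :=
    fun i j hij z hzi hzj => by
      simp only [P, Walk.support_cons, List.mem_cons] at hzi hzj
      rcases hzi with hzi | hzi
      · exact .inl hzi
      rcases hzj with hzj | hzj
      · exact .inl hzj
      exact .inr (eq_of_mem_support_of_mem_support hdeg (hadj i) (hadj j) (hne hij) (hq i) (hq j)
        (hvq i) (hvq j) hzi hzj)
  have hE := exists_mem_edges_of_forall_adj hdeg hw hvw hP hN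
  refine ⟨_, _, _, ?_, isTheta_of_fin_three hvw P hP hsupp hedges
    (exists_mem_support_of_forall_adj hdeg hw hvw hP hN) hE⟩
  rw [card_edgeFinset_eq_sum_length P (fun i => (hP i).isTrail) hedges hE, Fin.sum_univ_three]

theorem theta_of_two_connected_edges_general {V : Type*} [Fintype V] (n : ℕ)
    (G : SimpleGraph V) (hcard : Fintype.card V = n)
    (hconn : LConnected G 2) (hedges : Nat.card G.edgeSet = n + 1) :
    ∃ a b c : ℕ, a + b + c = n + 1 ∧ IsTheta G a b c := by
  classical
  have hdel (v : V) : (G.induce {v}ᶜ).Connected := by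
    rw [← coe_singleton]
    exact hconn.2 {v} (by simp)
  have hE : #G.edgeFinset = n + 1 := by rwa [edgeFinset_card, ← Nat.card_eq_fintype_card]
  have hmin := hconn.le_degree
  have hmax (z : V) : G.degree z ≤ 3 := by
    have := degree_add_card_le_of_connected_induce_compl (hdel z)
    omega
  obtain ⟨v, w, hvw, hT⟩ := card_eq_two.mp (card_filter_degree_eq_three hmin hmax (by omega))
  have hdeg3 (z : V) : G.degree z = 3 ↔ z = v ∨ z = w := by
    simpa using congrArg (z ∈ ·) hT
  have hdeg2 (z : V) (hzv : z ≠ v) (hzw : z ≠ w) : G.degree z = 2 := by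
    have := (hdeg3 z).not.mpr (by tauto)
    have := hmin z
    have := hmax z
    omega
  obtain ⟨a, b, c, habc, hθ⟩ :=
    exists_isTheta hvw (hdel v) (hdel w) ((hdeg3 v).mpr (.inl rfl)) hdeg2
  exact ⟨a, b, c, hE ▸ habc, hθ⟩

/-- A `2`-connected graph on `n ≥ 4` vertices with exactly `n + 1` edges is (isomorphic to) a
theta graph `θ_{a,b,c}` for some `a`, `b`, `c` with `a + b + c = n + 1`. -/
theorem theta_of_two_connected_edges {V : Type*} [Fintype V] (n : ℕ) (hn : 4 ≤ n)
    (G : SimpleGraph V) (hcard : Fintype.card V = n)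
    (hconn : LConnected G 2) (hedges : Nat.card G.edgeSet = n + 1) :
    ∃ a b c : ℕ, a + b + c = n + 1 ∧ IsTheta G a b c :=
  theta_of_two_connected_edges_general n G hcard hconn hedges
end
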